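/- arXiv:2103.16901 — 11 statements merged into one kernel-verified Lean document; each statement's English description precedes it below -/
import Mathlib

section
/- Let $P_{XY}$ be a joint probability mass function on $\mathcal{X}\times\mathcal{Y}$ with $|\mathcal{X}|=M$ finite and $\mathcal{Y}$ finite. Let $\mathcal{L}\colon\mathcal{Y}\to\binom{\mathcal{X}}{L}$ be a fixed-size list decoder with $1\le L<M$, and let $P_{\mathcal{L}}=\mathbb{P}[X\notin\mathcal{L}(Y)]$ be its list decoding error probability. Then, for every convex function $f\colon(0,\infty)\to\mathbb{R}$ with $f(1)=0$, $\;\mathbb{E}\bigl[D_f(P_{X|Y}(\cdot|Y)\,\|\,U_M)\bigr]\;\ge\;\frac{L}{M}\,f\!\left(\frac{M(1-P_{\mathcal{L}})}{L}\right)+\left(1-\frac{L}{M}\right)f\!\left(\frac{M P_{\mathcal{L}}}{M-L}\right)$. -/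
/-!
Write the left-hand side as `∑ q(y,x) f(p(y,x)/q(y,x))` over all pairs, with
`p(y,x) = P_{XY}(x,y)` and `q(y,x) = P_Y(y)/M`, and split the pairs according to whether
`x ∈ 𝓛(y)`. On the pairs inside the lists `q` has mass `L/M` and `p` has mass `1 - P_𝓛`,
on the others the masses are `1 - L/M` and `P_𝓛`; Jensen's inequality on each of the two
blocks gives the two terms of the bound. Jensen needs `f` convex on `[0, ∞)`, which is
where the right-continuity of `f` at `0` enters.
-/

open Filter Topology Finset

theorem ConvexOn.Ici_of_Ioi {f : ℝ → ℝ} {a : ℝ} (hf : ConvexOn ℝ (Set.Ioi a) f)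
    (ha : ContinuousWithinAt f (Set.Ioi a) a) : ConvexOn ℝ (Set.Ici a) f := by
  have hshift : ∀ x ∈ Set.Ici a, Tendsto (fun ε => f (x + ε)) (𝓝[>] 0) (𝓝 (f x)) := by
    intro x hx
    have hfx : ContinuousWithinAt f (Set.Ioi x) x := by
      rcases (Set.mem_Ici.mp hx).eq_or_lt with rfl | hax
      · exact ha
      · exact (hf.continuousOn_interior.continuousAt
          (by rw [interior_Ioi]; exact Ioi_mem_nhds hax)).continuousWithinAt
    refine hfx.tendsto.comp (tendsto_nhdsWithin_iff.mpr ⟨?_, ?_⟩)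
    · exact ((continuous_const_add x).tendsto' 0 x (add_zero x)).mono_left nhdsWithin_le_nhds
    · filter_upwards [self_mem_nhdsWithin] with ε (hε : 0 < ε)
      exact lt_add_of_pos_right x hε
  refine ⟨convex_Ici a, fun x hx y hy μ ν hμ hν hμν => ?_⟩
  have hshifted : ∀ᶠ ε in 𝓝[>] (0 : ℝ),
      f (μ • x + ν • y + ε) ≤ μ • f (x + ε) + ν • f (y + ε) := by
    filter_upwards [self_mem_nhdsWithin] with ε (hε : 0 < ε)
    have hcomb : μ • x + ν • y + ε = μ • (x + ε) + ν • (y + ε) := by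
      simp only [smul_eq_mul]; linear_combination (-ε) * hμν
    rw [hcomb]
    exact hf.2 (Set.mem_Ioi.mpr (by linarith [Set.mem_Ici.mp hx]))
      (Set.mem_Ioi.mpr (by linarith [Set.mem_Ici.mp hy])) hμ hν hμν
  exact le_of_tendsto_of_tendsto (hshift _ (convex_Ici a hx hy hμ hν hμν))
    (((hshift x hx).const_smul μ).add ((hshift y hy).const_smul ν)) hshifted

theorem ConvexOn.mul_map_sum_div_sum_le {ι : Type*} {f : ℝ → ℝ}
    (hf : ConvexOn ℝ (Set.Ici 0) f) {t : Finset ι} {p q : ι → ℝ} (hp : ∀ i ∈ t, 0 ≤ p i)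
    (hq : ∀ i ∈ t, 0 ≤ q i) (hpq : ∀ i ∈ t, q i = 0 → p i = 0) (hQ : 0 < ∑ i ∈ t, q i) :
    (∑ i ∈ t, q i) * f ((∑ i ∈ t, p i) / ∑ i ∈ t, q i) ≤ ∑ i ∈ t, q i * f (p i / q i) := by
  have hjensen := hf.map_centerMass_le hq hQ fun i hi => div_nonneg (hp i hi) (hq i hi)
  simp only [centerMass, smul_eq_mul, Function.comp_def] at hjensen
  rw [sum_congr rfl fun i hi => mul_div_cancel_of_imp' (hpq i hi), inv_mul_eq_div] at hjensen
  calc _ ≤ (∑ i ∈ t, q i) * ((∑ i ∈ t, q i)⁻¹ * ∑ i ∈ t, q i * f (p i / q i)) :=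
        mul_le_mul_of_nonneg_left hjensen hQ.le
    _ = _ := mul_inv_cancel_left₀ hQ.ne' _

theorem Finset.sum_sigma_fst_of_card_eq {X Y : Type*} [Fintype Y] (T : Y → Finset X) {k : ℕ}
    (hT : ∀ y, #(T y) = k) (g : Y → ℝ) : ∑ i ∈ univ.sigma T, g i.1 = k * ∑ y, g y := by
  simp only [sum_sigma, sum_const, hT, nsmul_eq_mul, mul_sum]

theorem ConvexOn.mul_map_sum_div_le_of_card_eq {X Y : Type*} [Fintype X] [Fintype Y]
    {f : ℝ → ℝ} (hf : ConvexOn ℝ (Set.Ici 0) f) {P : X → Y → ℝ} (hP : ∀ x y, 0 ≤ P x y)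
    (hPsum : ∑ x, ∑ y, P x y = 1) (T : Y → Finset X) {k : ℕ} (hk : 0 < k)
    (hT : ∀ y, #(T y) = k) {c : ℝ} (hc : 0 < c) :
    k * c * f ((∑ y, ∑ x ∈ T y, P x y) / (k * c)) ≤
      ∑ y, (∑ x', P x' y) * ∑ x ∈ T y, c * f (P x y / (∑ x', P x' y) / c) := by
  have hweight : ∑ i ∈ univ.sigma T, (∑ x', P x' i.1) * c = k * c := by
    rw [sum_sigma_fst_of_card_eq T hT fun y => (∑ x', P x' y) * c, ← sum_mul, sum_comm, hPsum,
      one_mul]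
  have hjensen := hf.mul_map_sum_div_sum_le (t := univ.sigma T) (p := fun i => P i.2 i.1)
    (fun i _ => hP _ _) (fun i _ => mul_nonneg (sum_nonneg fun x _ => hP x i.1) hc.le)
    (fun i _ h => (sum_eq_zero_iff_of_nonneg fun x _ => hP x i.1).1
      ((mul_eq_zero.1 h).resolve_right hc.ne') i.2 (mem_univ _))
    (by rw [hweight]; positivity)
  simpa only [hweight, sum_sigma, mul_sum, mul_assoc, div_div] using hjensen

theorem generalized_fano_f_divergence_general
    {X Y : Type*} [Fintype X] [Fintype Y] [DecidableEq X]
    (M L : ℕ) (hM : Fintype.card X = M) (hL1 : 1 ≤ L) (hLM : L < M)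
    (P : X → Y → ℝ) (hP : ∀ x y, 0 ≤ P x y) (hPsum : ∑ x, ∑ y, P x y = 1)
    (Lst : Y → Finset X) (hLst : ∀ y, (Lst y).card = L)
    (f : ℝ → ℝ) (hf : ConvexOn ℝ (Set.Ioi 0) f)
    (hf0 : Filter.Tendsto f (nhdsWithin 0 (Set.Ioi 0)) (nhds (f 0)))
    (PL : ℝ) (hPL : PL = ∑ y, ∑ x ∈ (Lst y)ᶜ, P x y) :
    ∑ y, (∑ x, P x y) *
        (∑ x : X, (1 / (M : ℝ)) * f ((P x y / ∑ x', P x' y) / (1 / (M : ℝ))))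
      ≥ ((L : ℝ) / M) * f ((M : ℝ) * (1 - PL) / L)
        + (1 - (L : ℝ) / M) * f ((M : ℝ) * PL / ((M : ℝ) - L)) := by
  have hf' := hf.Ici_of_Ioi hf0
  have hM0 : (0 : ℝ) < M := by exact_mod_cast Nat.zero_lt_of_lt hLM
  have hcard : ∀ y, #(Lst y)ᶜ = M - L := fun y => by rw [card_compl, hLst, hM]
  have hlist := hf'.mul_map_sum_div_le_of_card_eq hP hPsum Lst hL1 hLst (one_div_pos.2 hM0)
  have hcompl := hf'.mul_map_sum_div_le_of_card_eq hP hPsum _ (Nat.sub_pos_of_lt hLM) hcard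
    (one_div_pos.2 hM0)
  have hmass : ∑ y, ∑ x ∈ Lst y, P x y = 1 - PL := by
    rw [hPL, eq_sub_iff_add_eq, ← sum_add_distrib, ← hPsum, sum_comm]
    simp only [sum_add_sum_compl]
  calc _ = _ := by
        rw [hmass, ← hPL, Nat.cast_sub hLM.le, mul_one_div, mul_one_div, one_sub_div hM0.ne',
          div_div_eq_mul_div, div_div_eq_mul_div, mul_comm (1 - PL), mul_comm PL]
    _ ≤ _ := add_le_add hlist hcompl
    _ = _ := by simp only [← sum_add_distrib, ← mul_add, sum_add_sum_compl]

/-- **Generalized Fano inequality for fixed-size list decoding, via f-divergences.**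
`P x y` is the joint pmf `P_{XY}`, `Lst` is the fixed-size list decoder with lists of
cardinality `L`, and `f` is convex on `(0,∞)` with `f 1 = 0` (the convention
`f 0 = lim_{t↓0} f t` is encoded by the continuity hypothesis `hf0`).  Then the
expectation over `Y` of the `f`-divergence `D_f(P_{X|Y}(·|Y) ‖ U_M)` is lower bounded as
stated. -/
theorem generalized_fano_f_divergence
    {X Y : Type*} [Fintype X] [Fintype Y] [DecidableEq X]
    (M L : ℕ) (hM : Fintype.card X = M) (hL1 : 1 ≤ L) (hLM : L < M)
    (P : X → Y → ℝ) (hP : ∀ x y, 0 ≤ P x y) (hPsum : ∑ x, ∑ y, P x y = 1)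
    (Lst : Y → Finset X) (hLst : ∀ y, (Lst y).card = L)
    (f : ℝ → ℝ) (hf : ConvexOn ℝ (Set.Ioi 0) f) (hf1 : f 1 = 0)
    (hf0 : Filter.Tendsto f (nhdsWithin 0 (Set.Ioi 0)) (nhds (f 0)))
    (PL : ℝ) (hPL : PL = ∑ y, ∑ x ∈ (Lst y)ᶜ, P x y) :
    ∑ y, (∑ x, P x y) *
        (∑ x : X, (1 / (M : ℝ)) * f ((P x y / ∑ x', P x' y) / (1 / (M : ℝ))))
      ≥ ((L : ℝ) / M) * f ((M : ℝ) * (1 - PL) / L)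
        + (1 - (L : ℝ) / M) * f ((M : ℝ) * PL / ((M : ℝ) - L)) :=
  generalized_fano_f_divergence_general M L hM hL1 hLM P hP hPsum Lst hLst f hf hf0 PL hPL
end

section
/- Let $P_{XY}$ be a joint probability mass function on $\mathcal{X}\times\mathcal{Y}$ with $|\mathcal{X}|=M$ finite and $\mathcal{Y}$ finite. Let $\mathcal{L}^*\colon\mathcal{Y}\to\mathcal{X}$ be any decision rule (single-output decoder) and let $\varepsilon=\mathbb{P}[X\ne\mathcal{L}^*(Y)]$. Then, for every convex function $f\colon(0,\infty)\to\mathbb{R}$ with $f(1)=0$, $\;\mathbb{E}\bigl[D_f(P_{X|Y}(\cdot|Y)\,\|\,U_M)\bigr]\;\ge\;\frac{1}{M}\,f\bigl(M(1-\varepsilon)\bigr)+\left(1-\frac{1}{M}\right)f\!\left(\frac{M\varepsilon}{M-1}\right)$. -/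
open scoped BigOperators

lemma convexOn_Ici_of_Ioi {f : ℝ → ℝ} (hf : ConvexOn ℝ (Set.Ioi 0) f)
    (hf0 : Filter.Tendsto f (nhdsWithin 0 (Set.Ioi 0)) (nhds (f 0))) :
    ConvexOn ℝ (Set.Ici (0:ℝ)) f := by
  have key : ∀ y : ℝ, 0 < y → ∀ a b : ℝ, 0 ≤ a → 0 ≤ b → a + b = 1 →
      f (b * y) ≤ a * f 0 + b * f y := by
    intro y hy a b ha hb hab
    rcases eq_or_lt_of_le hb with hb0 | hb0
    · have ha1 : a = 1 := by linarith
      simp [← hb0, ha1]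
    · have hby : 0 < b * y := mul_pos hb0 hy
      have hcont : ContinuousAt f (b * y) :=
        ((hf.continuousOn isOpen_Ioi).continuousAt (isOpen_Ioi.mem_nhds hby))
      have h1 : Filter.Tendsto (fun t : ℝ => f (a * t + b * y))
          (nhdsWithin 0 (Set.Ioi 0)) (nhds (f (b * y))) := by
        have haff : Filter.Tendsto (fun t : ℝ => a * t + b * y)
            (nhdsWithin 0 (Set.Ioi 0)) (nhds (b * y)) := by
          have : Filter.Tendsto (fun t : ℝ => a * t + b * y) (nhds 0) (nhds (a * 0 + b * y)) :=
            ((continuous_const.mul continuous_id).add continuous_const).tendsto 0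
          simpa using this.mono_left nhdsWithin_le_nhds
        exact hcont.tendsto.comp haff
      have h2 : Filter.Tendsto (fun t : ℝ => a * f t + b * f y)
          (nhdsWithin 0 (Set.Ioi 0)) (nhds (a * f 0 + b * f y)) :=
        (hf0.const_mul a).add tendsto_const_nhds
      refine le_of_tendsto_of_tendsto h1 h2 ?_
      filter_upwards [self_mem_nhdsWithin] with t ht
      have := hf.2 ht (Set.mem_Ioi.2 hy) ha hb hab
      simpa using this
  refine ⟨convex_Ici 0, fun x hx y hy a b ha hb hab => ?_⟩
  rcases eq_or_lt_of_le (Set.mem_Ici.1 hx) with hx0 | hx0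
  · rcases eq_or_lt_of_le (Set.mem_Ici.1 hy) with hy0 | hy0
    · simp only [← hx0, ← hy0, smul_eq_mul, mul_zero, add_zero]
      have h : a * f 0 + b * f 0 = f 0 := by rw [← add_mul, hab, one_mul]
      linarith
    · have := key y hy0 a b ha hb hab
      simpa [← hx0] using this
  · rcases eq_or_lt_of_le (Set.mem_Ici.1 hy) with hy0 | hy0
    · have := key x hx0 b a hb ha (by linarith)
      simp only [← hy0, smul_eq_mul, mul_zero, add_zero]
      linarith
    · exact hf.2 (Set.mem_Ioi.2 hx0) (Set.mem_Ioi.2 hy0) ha hb hab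


set_option maxHeartbeats 2000000 in
/-- **Fano-type inequality for a single-output decoder, via f-divergences**
(the case `L = 1` of the generalized Fano inequality for fixed-size list decoding).
`P x y` is the joint pmf `P_{XY}`, `g` is an arbitrary decision rule, and
`ε = ℙ[X ≠ g(Y)]` is its error probability. -/
theorem fano_f_divergence_single_decoder
    {X Y : Type*} [Fintype X] [Fintype Y] [DecidableEq X]
    (M : ℕ) (hM : Fintype.card X = M) (hM2 : 2 ≤ M)
    (P : X → Y → ℝ) (hP : ∀ x y, 0 ≤ P x y) (hPsum : ∑ x, ∑ y, P x y = 1)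
    (g : Y → X)
    (f : ℝ → ℝ) (hf : ConvexOn ℝ (Set.Ioi 0) f) (hf1 : f 1 = 0)
    (hf0 : Filter.Tendsto f (nhdsWithin 0 (Set.Ioi 0)) (nhds (f 0)))
    (ε : ℝ) (hε : ε = ∑ y, ∑ x ∈ Finset.univ \ {g y}, P x y) :
    ∑ y, (∑ x, P x y) *
        (∑ x : X, (1 / (M : ℝ)) * f ((P x y / ∑ x', P x' y) / (1 / (M : ℝ))))
      ≥ (1 / (M : ℝ)) * f ((M : ℝ) * (1 - ε))
        + (1 - 1 / (M : ℝ)) * f ((M : ℝ) * ε / ((M : ℝ) - 1)) := by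
  have hfI : ConvexOn ℝ (Set.Ici (0:ℝ)) f := convexOn_Ici_of_Ioi hf hf0
  set Mr : ℝ := (M : ℝ) with hMr
  have hMr2 : (2:ℝ) ≤ Mr := by rw [hMr]; exact_mod_cast hM2
  have hMrpos : 0 < Mr := by linarith
  have hMr1 : 0 < Mr - 1 := by linarith
  set Q : Y → ℝ := fun y => ∑ x, P x y with hQ
  set t : Y → ℝ := fun y => P (g y) y / Q y with ht
  set φ : ℝ → ℝ :=
    fun u => (1 / Mr) * f (Mr * u) + (1 - 1 / Mr) * f (Mr * (1 - u) / (Mr - 1)) with hφdef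
  have hQnn : ∀ y, 0 ≤ Q y := fun y => Finset.sum_nonneg fun x _ => hP x y
  have hQsum : ∑ y, Q y = 1 := by rw [← hPsum]; exact Finset.sum_comm
  have hPle : ∀ y, P (g y) y ≤ Q y := fun y =>
    Finset.single_le_sum (fun x _ => hP x y) (Finset.mem_univ _)
  have hQzero : ∀ y, Q y = 0 → ∀ x, P x y = 0 := by
    intro y hy x
    have h1 : P x y ≤ Q y := Finset.single_le_sum (fun x _ => hP x y) (Finset.mem_univ _)
    have h2 : P x y ≤ 0 := by rw [← hy]; exact h1
    linarith [hP x y]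
  have ht01 : ∀ y, t y ∈ Set.Icc (0:ℝ) 1 := by
    intro y
    rcases eq_or_lt_of_le (hQnn y) with h0 | h0
    · simp [ht, ← h0]
    · exact ⟨div_nonneg (hP _ _) (hQnn y), (div_le_one h0).2 (hPle y)⟩
  -- step B
  have hsumt : ∑ y, Q y * t y = 1 - ε := by
    have h1 : ∀ y, Q y * t y = P (g y) y := by
      intro y
      rcases eq_or_lt_of_le (hQnn y) with h0 | h0
      · simp [ht, ← h0, hQzero y h0.symm]
      · exact mul_div_cancel₀ _ h0.ne'
    have h2 : ∀ y : Y, ∑ x ∈ Finset.univ \ {g y}, P x y = Q y - P (g y) y := by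
      intro y
      rw [Finset.sum_sdiff_eq_sub (Finset.subset_univ _)]
      simp [hQ]
    have h3 : ε = 1 - ∑ y, P (g y) y := by
      rw [hε]
      simp only [h2]
      rw [Finset.sum_sub_distrib, hQsum]
    simp only [h1]
    linarith
  -- step D: φ convex on Icc 0 1
  have hφ : ConvexOn ℝ (Set.Icc (0:ℝ) 1) φ := by
    refine ⟨convex_Icc 0 1, fun u hu v hv a b ha hb hab => ?_⟩
    simp only [smul_eq_mul, hφdef]
    have e1 : Mr * (a * u + b * v) = a * (Mr * u) + b * (Mr * v) := by ring
    have e2 : Mr * (1 - (a * u + b * v)) / (Mr - 1)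
        = a * (Mr * (1 - u) / (Mr - 1)) + b * (Mr * (1 - v) / (Mr - 1)) := by
      field_simp
      nlinarith [hab]
    have m1 : Mr * u ∈ Set.Ici (0:ℝ) := Set.mem_Ici.2 (by nlinarith [hu.1])
    have m2 : Mr * v ∈ Set.Ici (0:ℝ) := Set.mem_Ici.2 (by nlinarith [hv.1])
    have m3 : Mr * (1 - u) / (Mr - 1) ∈ Set.Ici (0:ℝ) :=
      Set.mem_Ici.2 (div_nonneg (by nlinarith [hu.2]) hMr1.le)
    have m4 : Mr * (1 - v) / (Mr - 1) ∈ Set.Ici (0:ℝ) :=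
      Set.mem_Ici.2 (div_nonneg (by nlinarith [hv.2]) hMr1.le)
    have i1 := hfI.2 m1 m2 ha hb hab
    have i2 := hfI.2 m3 m4 ha hb hab
    simp only [smul_eq_mul] at i1 i2
    rw [e1] at *
    rw [e2]
    have c1 : 0 ≤ 1 / Mr := by positivity
    have c2 : 0 ≤ 1 - 1 / Mr := by
      rw [sub_nonneg]
      rw [div_le_one hMrpos]; linarith
    nlinarith [mul_le_mul_of_nonneg_left i1 c1, mul_le_mul_of_nonneg_left i2 c2]
  -- step E: inner Jensen
  have key : ∀ y, Q y ≠ 0 →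
      φ (t y) ≤ ∑ x : X, (1 / Mr) * f ((P x y / Q y) / (1 / Mr)) := by
    intro y hy
    have hQpos : 0 < Q y := lt_of_le_of_ne (hQnn y) (Ne.symm hy)
    set p : X → ℝ := fun x => P x y / Q y with hp
    have hpnn : ∀ x, 0 ≤ p x := fun x => div_nonneg (hP x y) (hQnn y)
    have hpsum : ∑ x, p x = 1 := by
      rw [hp]; rw [← Finset.sum_div]; exact div_self hy
    have hrw : ∀ x, (P x y / Q y) / (1 / Mr) = Mr * p x := by
      intro x
      simp only [hp]
      rw [one_div, div_inv_eq_mul]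
      ring
    simp only [hrw]
    have hcard : (Finset.univ \ {g y} : Finset X).card = M - 1 := by
      rw [Finset.card_sdiff_of_subset (Finset.subset_univ _), Finset.card_univ, hM,
        Finset.card_singleton]
    have hcardR : ((Finset.univ \ {g y} : Finset X).card : ℝ) = Mr - 1 := by
      rw [hcard]
      push_cast [Nat.cast_sub (by omega : 1 ≤ M)]
      ring
    have hrest : ∑ x ∈ Finset.univ \ {g y}, p x = 1 - p (g y) := by
      rw [Finset.sum_sdiff_eq_sub (Finset.subset_univ _), hpsum]
      simp
    -- Jensen on the rest
    have hJ := hfI.map_sum_le (t := Finset.univ \ {g y})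
      (w := fun _ => 1 / (Mr - 1)) (p := fun x => Mr * p x)
      (fun i _ => by positivity)
      (by rw [Finset.sum_const, nsmul_eq_mul, hcardR, mul_one_div]
          exact div_self hMr1.ne')
      (fun i _ => Set.mem_Ici.2 (mul_nonneg hMrpos.le (hpnn i)))
    simp only [smul_eq_mul] at hJ
    have harg : ∑ x ∈ Finset.univ \ {g y}, (1 / (Mr - 1)) * (Mr * p x)
        = Mr * (1 - p (g y)) / (Mr - 1) := by
      rw [← Finset.mul_sum, ← Finset.mul_sum, hrest]
      rw [one_div, inv_mul_eq_div]
    rw [harg] at hJ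
    have hsplit : ∑ x : X, (1 / Mr) * f (Mr * p x)
        = (∑ x ∈ Finset.univ \ {g y}, (1 / Mr) * f (Mr * p x))
          + (1 / Mr) * f (Mr * p (g y)) := by
      exact Finset.sum_eq_sum_sdiff_singleton_add (Finset.mem_univ (g y)) _
    have hb : (1 - 1 / Mr) * f (Mr * (1 - p (g y)) / (Mr - 1))
        ≤ ∑ x ∈ Finset.univ \ {g y}, (1 / Mr) * f (Mr * p x) := by
      have c2 : (0:ℝ) ≤ 1 - 1 / Mr := by
        rw [sub_nonneg, div_le_one hMrpos]; linarith
      calc (1 - 1 / Mr) * f (Mr * (1 - p (g y)) / (Mr - 1))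
          ≤ (1 - 1 / Mr) * ∑ x ∈ Finset.univ \ {g y}, (1 / (Mr - 1)) * f (Mr * p x) :=
            mul_le_mul_of_nonneg_left hJ c2
        _ = ∑ x ∈ Finset.univ \ {g y}, (1 / Mr) * f (Mr * p x) := by
            have hscal : (1 - 1 / Mr) * (1 / (Mr - 1)) = 1 / Mr := by
              have h1 : Mr ≠ 0 := hMrpos.ne'
              have h2 : Mr - 1 ≠ 0 := hMr1.ne'
              field_simp
            rw [Finset.mul_sum]
            refine Finset.sum_congr rfl fun x _ => ?_
            rw [← mul_assoc, hscal]
    have htp : t y = p (g y) := rfl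
    rw [hsplit, htp]
    simp only [hφdef]
    linarith
  -- final assembly
  rw [ge_iff_le]
  have hRHS : (1 / Mr) * f (Mr * (1 - ε)) + (1 - 1 / Mr) * f (Mr * ε / (Mr - 1))
      = φ (1 - ε) := by
    simp only [hφdef, sub_sub_cancel]
  have hOuter : φ (1 - ε) ≤ ∑ y, Q y * φ (t y) := by
    have := hφ.map_sum_le (t := Finset.univ) (w := Q) (p := t)
      (fun y _ => hQnn y) hQsum (fun y _ => ht01 y)
    simp only [smul_eq_mul] at this
    rw [hsumt] at this
    exact this
  have hstep : ∑ y, Q y * φ (t y)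
      ≤ ∑ y, Q y * (∑ x : X, (1 / Mr) * f ((P x y / Q y) / (1 / Mr))) := by
    refine Finset.sum_le_sum fun y _ => ?_
    rcases eq_or_ne (Q y) 0 with h0 | h0
    · rw [h0, zero_mul, zero_mul]
    · exact mul_le_mul_of_nonneg_left (key y h0) (hQnn y)
  calc (1 / Mr) * f (Mr * (1 - ε)) + (1 - 1 / Mr) * f (Mr * ε / (Mr - 1))
      = φ (1 - ε) := hRHS
    _ ≤ ∑ y, Q y * φ (t y) := hOuter
    _ ≤ ∑ y, Q y * (∑ x : X, (1 / Mr) * f ((P x y / Q y) / (1 / Mr))) := hstep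
    _ = ∑ y, (∑ x, P x y) *
        (∑ x : X, (1 / Mr) * f ((P x y / ∑ x', P x' y) / (1 / Mr))) := by
          simp only [hQ]
end

section
/- Let $P_{XY}$ be a joint probability mass function on $\mathcal{X}\times\mathcal{Y}$ with $|\mathcal{X}|=M$ finite and $\mathcal{Y}$ finite. Let $\mathcal{L}\colon\mathcal{Y}\to\binom{\mathcal{X}}{L}$ be a fixed-size list decoder with $1\le L<M$, and let $P_{\mathcal{L}}=\mathbb{P}[X\notin\mathcal{L}(Y)]$. Then $H(X|Y)\;\le\;\log M-d\!\left(P_{\mathcal{L}}\,\Big\|\,1-\frac{L}{M}\right)$. -/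
open scoped BigOperators

lemma logsum_aux {I : Type*} (s : Finset I) (p c : I → ℝ)
    (hp : ∀ i ∈ s, 0 ≤ p i) (hc : ∀ i ∈ s, 0 ≤ c i)
    (h0 : ∀ i ∈ s, p i ≠ 0 → 0 < c i) :
    ∑ i ∈ s, p i * Real.log (c i / p i)
      ≤ (∑ i ∈ s, p i) * Real.log ((∑ i ∈ s, c i) / (∑ i ∈ s, p i)) := by
  classical
  rcases eq_or_lt_of_le (Finset.sum_nonneg hp) with h | hSpos
  · have hall : ∀ i ∈ s, p i = 0 :=
      (Finset.sum_eq_zero_iff_of_nonneg hp).mp h.symm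
    rw [Finset.sum_eq_zero (fun i hi => by rw [hall i hi]; ring), ← h]
    simp
  set S := ∑ i ∈ s, p i with hS
  set t := s.filter (fun i => p i ≠ 0) with ht
  have htsub : t ⊆ s := Finset.filter_subset _ _
  have hLHS : ∑ i ∈ s, p i * Real.log (c i / p i)
      = ∑ i ∈ t, p i * Real.log (c i / p i) := by
    rw [ht, Finset.sum_filter_of_ne]
    intro i _ hne hpz
    exact hne (by rw [hpz]; ring)
  have hSt : ∑ i ∈ t, p i = S := by
    rw [hS, ht, Finset.sum_filter_of_ne]
    intro i _ hne hpz
    exact hne hpz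
  have hw1 : ∑ i ∈ t, p i / S = 1 := by
    rw [← Finset.sum_div, hSt, div_self hSpos.ne']
  have hpt : ∀ i ∈ t, 0 < p i := fun i hi =>
    lt_of_le_of_ne (hp i (htsub hi)) (Ne.symm (Finset.mem_filter.mp hi).2)
  have hct : ∀ i ∈ t, 0 < c i := fun i hi =>
    h0 i (htsub hi) (Finset.mem_filter.mp hi).2
  have jensen := strictConcaveOn_log_Ioi.concaveOn.le_map_sum
    (t := t) (w := fun i => p i / S) (p := fun i => c i / p i)
    (fun i hi => div_nonneg (hp i (htsub hi)) hSpos.le) hw1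
    (fun i hi => Set.mem_Ioi.mpr (div_pos (hct i hi) (hpt i hi)))
  simp only [smul_eq_mul] at jensen
  have key : ∑ i ∈ t, p i / S * (c i / p i) = (∑ i ∈ t, c i) / S := by
    rw [Finset.sum_div]
    refine Finset.sum_congr rfl fun i hi => ?_
    rw [div_mul_div_comm, mul_comm S (p i), mul_div_mul_left _ _ (hpt i hi).ne']
  have hmul : ∑ i ∈ t, p i / S * Real.log (c i / p i)
      = (∑ i ∈ t, p i * Real.log (c i / p i)) / S := by
    rw [Finset.sum_div]
    exact Finset.sum_congr rfl fun i hi => by ring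
  rw [key, hmul] at jensen
  have htne : t.Nonempty := by
    by_contra h
    rw [Finset.not_nonempty_iff_eq_empty] at h
    rw [h, Finset.sum_empty] at hSt
    exact hSpos.ne hSt
  have hct_sum_pos : 0 < ∑ i ∈ t, c i := Finset.sum_pos hct htne
  have hmono : Real.log ((∑ i ∈ t, c i) / S) ≤ Real.log ((∑ i ∈ s, c i) / S) := by
    apply Real.log_le_log (div_pos hct_sum_pos hSpos)
    have := Finset.sum_le_sum_of_subset_of_nonneg htsub (fun i hi _ => hc i hi)
    gcongr
  calc ∑ i ∈ s, p i * Real.log (c i / p i)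
      = ∑ i ∈ t, p i * Real.log (c i / p i) := hLHS
    _ ≤ S * Real.log ((∑ i ∈ t, c i) / S) := by
        rw [← div_le_iff₀' hSpos]; exact jensen
    _ ≤ S * Real.log ((∑ i ∈ s, c i) / S) := mul_le_mul_of_nonneg_left hmono hSpos.le

lemma helper_id (t a q : ℝ) (ha : 0 < a) (hq : 0 < q) :
    t * Real.log (t / q) = t * Real.log (a / q) - t * Real.log (a / t) := by
  rcases eq_or_ne t 0 with h | h
  · simp [h]
  · rw [Real.log_div h hq.ne', Real.log_div ha.ne' hq.ne', Real.log_div ha.ne' h]; ring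

/-- **Generalized Fano inequality for fixed-size list decoding.**
`P x y` is the joint pmf `P_{XY}` on `X × Y` with `|X| = M`, `Lst` is a list decoder with
lists of fixed cardinality `L`, and `PL = ℙ[X ∉ Lst(Y)]`.  The conditional entropy
`H(X|Y) = -∑_y ∑_x P(x,y) log P_{X|Y}(x|y)` is upper bounded by
`log M - d(PL ‖ 1 - L/M)`, where `d(p‖q) = p log (p/q) + (1-p) log ((1-p)/(1-q))`
is the binary relative entropy (with its continuous extension; here `q = 1 - L/M ∈ (0,1)`,
for which Lean's conventions `log 0 = 0`, `0 * x = 0` give exactly that extension). -/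
theorem generalized_fano_entropy_list_decoding
    {X Y : Type*} [Fintype X] [Fintype Y] [DecidableEq X]
    (M L : ℕ) (hM : Fintype.card X = M) (hL1 : 1 ≤ L) (hLM : L < M)
    (P : X → Y → ℝ) (hP : ∀ x y, 0 ≤ P x y) (hPsum : ∑ x, ∑ y, P x y = 1)
    (Lst : Y → Finset X) (hLst : ∀ y, (Lst y).card = L)
    (PL : ℝ) (hPL : PL = ∑ y, ∑ x ∈ (Lst y)ᶜ, P x y) :
    -∑ y, ∑ x, P x y * Real.log (P x y / ∑ x', P x' y)
      ≤ Real.log M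
        - (PL * Real.log (PL / (1 - (L : ℝ) / M))
            + (1 - PL) * Real.log ((1 - PL) / ((L : ℝ) / M))) := by
  classical
  set S : Y → ℝ := fun y => ∑ x', P x' y with hSdef
  have hMpos : (0:ℝ) < M := by
    have : 0 < M := lt_of_le_of_lt (Nat.zero_le L) hLM
    exact_mod_cast this
  have hLpos : (0:ℝ) < L := by exact_mod_cast hL1
  have hMLpos : (0:ℝ) < (M:ℝ) - L := by
    have : (L:ℝ) < M := by exact_mod_cast hLM
    linarith
  have hSsum : ∑ y, S y = 1 := by
    rw [hSdef]; rw [← hPsum, Finset.sum_comm]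
  have hSnonneg : ∀ y, 0 ≤ S y := fun y => Finset.sum_nonneg fun x _ => hP x y
  have hPS : ∀ x y, P x y ≤ S y := fun x y =>
    Finset.single_le_sum (fun x' _ => hP x' y) (Finset.mem_univ x)
  -- rewrite LHS
  have hLHS : -∑ y, ∑ x, P x y * Real.log (P x y / ∑ x', P x' y)
      = ∑ y, ∑ x, P x y * Real.log (S y / P x y) := by
    rw [← Finset.sum_neg_distrib]
    refine Finset.sum_congr rfl fun y _ => ?_
    rw [← Finset.sum_neg_distrib]
    refine Finset.sum_congr rfl fun x _ => ?_
    rw [← inv_div, Real.log_inv]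
    ring
  -- split inner sums
  have hsplit : ∀ (f : X → Y → ℝ),
      (∑ y, ∑ x, f x y) = (∑ y, ∑ x ∈ Lst y, f x y) + ∑ y, ∑ x ∈ (Lst y)ᶜ, f x y := by
    intro f
    rw [← Finset.sum_add_distrib]
    refine Finset.sum_congr rfl fun y _ => ?_
    rw [Finset.sum_add_sum_compl]
  set Qin : ℝ := ∑ y, ∑ x ∈ Lst y, P x y with hQin
  have hQinPL : Qin + PL = 1 := by
    rw [hQin, hPL, ← hsplit, Finset.sum_comm, hPsum]
  -- log-sum on the "in" part
  have key_in : (∑ y, ∑ x ∈ Lst y, P x y * Real.log (S y / P x y))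
      ≤ Qin * Real.log ((L:ℝ) / Qin) := by
    have h := logsum_aux ((Finset.univ : Finset Y).sigma fun y => Lst y)
      (fun z => P z.2 z.1) (fun z => S z.1)
      (fun z _ => hP _ _) (fun z _ => hSnonneg _)
      (fun z _ hz => lt_of_lt_of_le (lt_of_le_of_ne (hP z.2 z.1) (Ne.symm hz)) (hPS _ _))
    rw [Finset.sum_sigma, Finset.sum_sigma, Finset.sum_sigma] at h
    have hc : (∑ y, ∑ _x ∈ Lst y, S y) = (L:ℝ) := by
      have : ∀ y : Y, (∑ _x ∈ Lst y, S y) = (L:ℝ) * S y := by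
        intro y
        rw [Finset.sum_const, hLst, nsmul_eq_mul]
      rw [Finset.sum_congr rfl fun y _ => this y, ← Finset.mul_sum, hSsum, mul_one]
    rw [hc] at h
    exact h
  -- log-sum on the "out" part
  have key_out : (∑ y, ∑ x ∈ (Lst y)ᶜ, P x y * Real.log (S y / P x y))
      ≤ PL * Real.log (((M:ℝ) - L) / PL) := by
    have h := logsum_aux ((Finset.univ : Finset Y).sigma fun y => (Lst y)ᶜ)
      (fun z => P z.2 z.1) (fun z => S z.1)
      (fun z _ => hP _ _) (fun z _ => hSnonneg _)
      (fun z _ hz => lt_of_lt_of_le (lt_of_le_of_ne (hP z.2 z.1) (Ne.symm hz)) (hPS _ _))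
    rw [Finset.sum_sigma, Finset.sum_sigma, Finset.sum_sigma] at h
    have hcard : ∀ y : Y, (((Lst y)ᶜ : Finset X).card : ℝ) = (M:ℝ) - L := by
      intro y
      rw [Finset.card_compl, hLst, hM]
      push_cast [Nat.cast_sub hLM.le]
      ring
    have hc : (∑ y, ∑ _x ∈ (Lst y)ᶜ, S y) = (M:ℝ) - L := by
      have : ∀ y : Y, (∑ _x ∈ (Lst y)ᶜ, S y) = ((M:ℝ) - L) * S y := by
        intro y
        rw [Finset.sum_const, nsmul_eq_mul, hcard]
      rw [Finset.sum_congr rfl fun y _ => this y, ← Finset.mul_sum, hSsum, mul_one]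
    rw [hc, ← hPL] at h
    exact h
  -- identity for the RHS
  have hq1 : (0:ℝ) < 1 - (L:ℝ)/M := by
    rw [sub_pos, div_lt_one hMpos]
    exact_mod_cast hLM
  have hq2 : (0:ℝ) < (L:ℝ)/M := div_pos hLpos hMpos
  have ha1 : ((M:ℝ) - L) / (1 - (L:ℝ)/M) = M := by
    field_simp
  have ha2 : (L:ℝ) / ((L:ℝ)/M) = M := by
    field_simp
  have e1 := helper_id PL ((M:ℝ) - L) (1 - (L:ℝ)/M) hMLpos hq1
  have e2 := helper_id (1 - PL) (L:ℝ) ((L:ℝ)/M) hLpos hq2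
  rw [ha1] at e1
  rw [ha2] at e2
  have hQinEq : Qin = 1 - PL := by linarith
  rw [hQinEq] at key_in
  rw [hLHS, hsplit (fun x y => P x y * Real.log (S y / P x y))]
  have hlogM : PL * Real.log M + (1 - PL) * Real.log M = Real.log M := by ring
  linarith [key_in, key_out, e1, e2]
end

section
/- Let $P_{XY}$ be a joint probability mass function on $\mathcal{X}\times\mathcal{Y}$ with $|\mathcal{X}|=M$ finite and $\mathcal{Y}$ finite, let $\mathcal{L}\colon\mathcal{Y}\to\binom{\mathcal{X}}{L}$ be a fixed-size list decoder with $1\le L<M$, and let $P_{\mathcal{L}}=\mathbb{P}[X\notin\mathcal{L}(Y)]$. Let $f\colon(0,\infty)\to\mathbb{R}$ be convex with $f(1)=0$ and twice differentiable, and suppose there exists a constant $m_f>0$ such that $f''(t)\ge m_f$ for all $t\in[\xi_1^*,\xi_2^*]\cap(0,\infty)$, where $\xi_1^*=M\inf_{(x,y)}P_{X|Y}(x|y)$ and $\xi_2^*=M\sup_{(x,y)}P_{X|Y}(x|y)$. Then $\mathbb{E}\bigl[D_f(P_{X|Y}(\cdot|Y)\,\|\,U_M)\bigr]\;\ge\;\frac{L}{M}\,f\!\left(\frac{M(1-P_{\mathcal{L}})}{L}\right)+\left(1-\frac{L}{M}\right)f\!\left(\frac{M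 P_{\mathcal{L}}}{M-L}\right)+\tfrac12 m_f M\left(\mathbb{E}[P_{X|Y}(X|Y)]-\frac{1-P_{\mathcal{L}}}{L}-\frac{P_{\mathcal{L}}}{M-L}\right)^{+}$, where $u^+=\max\{u,0\}$. -/
/-!
With `p = P_Y` and `r(x, y) = M P_{X|Y}(x|y)`, the left-hand side is the mean of `f ∘ r`
under the weights `p(y) / M` on the pairs `(x, y)`. The bound on `f''` makes `f`
`m_f`-strongly convex, i.e. `f - m_f t² / 2` convex, on `[ξ₁*, ξ₂*] ∩ [0, ∞)`, which
contains `r(x, y)` whenever `p(y) > 0`. Split the pairs according to whether `x ∈ 𝓛(y)`.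
The two parts have weights `L / M` and `(M - L) / M`, and on them `r` has mean
`M (1 - P_𝓛) / L`, resp. `M P_𝓛 / (M - L)`. Jensen's inequality for `f - m_f t² / 2` on a
part gives `f` at the mean plus `m_f / 2` times the variance of `r` on it. With `c` the
size of the lists of the part and `Q ∈ [0, 1]` its probability, that variance is
`M (∑_{part} P_{XY} P_{X|Y} - Q² / c)`: nonnegative, and since `Q² ≤ Q` at least
`M (∑_{part} P_{XY} P_{X|Y} - Q / c)`. Adding the two parts gives the positive part.
-/

open Set Finset

theorem strongConvexOn_of_le_deriv2 {D : Set ℝ} {f : ℝ → ℝ} {m : ℝ} (hD : Convex ℝ D)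
    (hf : ContinuousOn f D) (hf' : ∀ t ∈ interior D, DifferentiableAt ℝ f t)
    (hf'' : ∀ t ∈ interior D, DifferentiableAt ℝ (deriv f) t)
    (hm : ∀ t ∈ interior D, m ≤ deriv (deriv f) t) : StrongConvexOn D m f := by
  rw [strongConvexOn_iff_convex]
  simp only [Real.norm_eq_abs, sq_abs]
  refine convexOn_of_hasDerivWithinAt2_nonneg (f' := fun t ↦ deriv f t - m * t)
    (f'' := fun t ↦ deriv (deriv f) t - m) hD (hf.sub (by fun_prop)) (fun t ht ↦ ?_)
    (fun t ht ↦ ?_) fun t ht ↦ sub_nonneg.2 (hm t ht)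
  · refine (((hf' t ht).hasDerivAt.sub ((hasDerivAt_pow 2 t).const_mul (m / 2))).congr_deriv
      ?_).hasDerivWithinAt
    norm_num
    ring
  · exact (((hf'' t ht).hasDerivAt.sub ((hasDerivAt_id t).const_mul m)).congr_deriv
      (by rw [mul_one])).hasDerivWithinAt

theorem strongConvexOn_Icc_inter_Ici {f : ℝ → ℝ} {a b m : ℝ}
    (hf0 : ContinuousWithinAt f (Ioi 0) 0) (hf' : ∀ t ∈ Ioi (0 : ℝ), DifferentiableAt ℝ f t)
    (hf'' : ∀ t ∈ Ioi (0 : ℝ), DifferentiableAt ℝ (deriv f) t)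
    (hm : ∀ t ∈ Icc a b ∩ Ioi 0, m ≤ deriv (deriv f) t) :
    StrongConvexOn (Icc a b ∩ Ici 0) m f := by
  have hcont : ContinuousOn f (Ici 0) := by
    intro t (ht : 0 ≤ t)
    rcases ht.eq_or_lt with rfl | ht
    · exact continuousWithinAt_Ioi_iff_Ici.1 hf0
    · exact (hf' t ht).continuousAt.continuousWithinAt
  have hint : interior (Icc a b ∩ Ici 0) ⊆ Icc a b ∩ Ioi 0 := by
    rw [interior_inter, interior_Ici]
    exact inter_subset_inter_left _ interior_subset
  exact strongConvexOn_of_le_deriv2 ((convex_Icc a b).inter (convex_Ici 0))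
    (hcont.mono inter_subset_right) (fun t ht ↦ hf' t (hint ht).2)
    (fun t ht ↦ hf'' t (hint ht).2) fun t ht ↦ hm t (hint ht)

theorem Finset.sum_mul_sq_sub_centerMass {ι : Type*} {s : Finset ι} {w t : ι → ℝ}
    (hW : ∑ i ∈ s, w i ≠ 0) :
    ∑ i ∈ s, w i * (t i - s.centerMass w t) ^ 2
      = ∑ i ∈ s, w i * t i ^ 2 - (∑ i ∈ s, w i) * s.centerMass w t ^ 2 := by
  set a := s.centerMass w t
  have hmean : (∑ i ∈ s, w i) * a = ∑ i ∈ s, w i * t i := by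
    simp only [a, centerMass, smul_eq_mul, ← mul_assoc, mul_inv_cancel₀ hW, one_mul]
  have hexpand : ∑ i ∈ s, w i * (t i - a) ^ 2
      = ∑ i ∈ s, w i * t i ^ 2 - 2 * a * ∑ i ∈ s, w i * t i
        + (∑ i ∈ s, w i) * a ^ 2 := by
    rw [mul_sum, sum_mul, ← sum_sub_distrib, ← sum_add_distrib]
    exact sum_congr rfl fun i _ ↦ by ring
  rw [hexpand, ← hmean]
  ring

theorem Finset.sum_mul_centerMass_sq_le_sum_mul_sq {ι : Type*} {s : Finset ι} {w t : ι → ℝ}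
    (hw : ∀ i ∈ s, 0 ≤ w i) (hW : ∑ i ∈ s, w i ≠ 0) :
    (∑ i ∈ s, w i) * s.centerMass w t ^ 2 ≤ ∑ i ∈ s, w i * t i ^ 2 :=
  sub_nonneg.1 <| sum_mul_sq_sub_centerMass hW ▸
    sum_nonneg fun i hi ↦ mul_nonneg (hw i hi) (sq_nonneg _)

theorem StrongConvexOn.map_centerMass_add_le {ι : Type*} {D : Set ℝ} {f : ℝ → ℝ} {m : ℝ}
    (hf : StrongConvexOn D m f) {s : Finset ι} {w t : ι → ℝ} (hw : ∀ i ∈ s, 0 ≤ w i)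
    (hW : 0 < ∑ i ∈ s, w i) (ht : ∀ i ∈ s, w i ≠ 0 → t i ∈ D) :
    (∑ i ∈ s, w i) * f (s.centerMass w t)
      + m / 2 * (∑ i ∈ s, w i * t i ^ 2 - (∑ i ∈ s, w i) * s.centerMass w t ^ 2)
      ≤ ∑ i ∈ s, w i * f (t i) := by
  classical
  have hJ := (strongConvexOn_iff_convex.1 hf).map_centerMass_le (t := {i ∈ s | w i ≠ 0})
    (fun i hi ↦ hw i (mem_filter.1 hi).1) (by rwa [sum_filter_ne_zero])
    fun i hi ↦ ht i (mem_filter.1 hi).1 (mem_filter.1 hi).2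
  rw [centerMass_filter_ne_zero, centerMass_filter_ne_zero] at hJ
  set a := s.centerMass w t
  rw [centerMass, smul_eq_mul, le_inv_mul_iff₀ hW] at hJ
  simp only [Function.comp_apply, Real.norm_eq_abs, sq_abs, smul_eq_mul, mul_sub,
    sum_sub_distrib, ← mul_sum, mul_left_comm (w _) (m / 2)] at hJ
  linarith

theorem sum_sum_add_sum_sum_compl {X Y β : Type*} [Fintype X] [DecidableEq X] [Fintype Y]
    [AddCommMonoid β] (G : Y → Finset X) (h : Y → X → β) :
    ∑ y, ∑ x ∈ G y, h y x + ∑ y, ∑ x ∈ (G y)ᶜ, h y x = ∑ y, ∑ x, h y x := by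
  rw [← sum_add_distrib]
  exact sum_congr rfl fun y _ ↦ sum_add_sum_compl _ _

theorem mul_div_marginal_mem_Icc {X Y : Type*} [Fintype X] [Finite Y] {P : X → Y → ℝ}
    (hP : ∀ x y, 0 ≤ P x y) {M : ℝ} (hM : 0 ≤ M) {x : X} {y : Y} (hy : 0 < ∑ x', P x' y) :
    M * (P x y / ∑ x', P x' y)
      ∈ Icc (M * sInf {p | ∃ x y, 0 < ∑ x', P x' y ∧ p = P x y / ∑ x', P x' y})
          (M * sSup {p | ∃ x y, 0 < ∑ x', P x' y ∧ p = P x y / ∑ x', P x' y})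
        ∩ Ici 0 := by
  have hfin : {p | ∃ x y, 0 < ∑ x', P x' y ∧ p = P x y / ∑ x', P x' y}.Finite :=
    (finite_range fun z : X × Y ↦ P z.1 z.2 / ∑ x', P x' z.2).subset
      fun _ ⟨x, y, _, hp⟩ ↦ ⟨(x, y), hp.symm⟩
  refine ⟨⟨?_, ?_⟩, mul_nonneg hM (div_nonneg (hP x y) hy.le)⟩ <;> gcongr
  exacts [csInf_le hfin.bddBelow ⟨x, y, hy, rfl⟩, le_csSup hfin.bddAbove ⟨x, y, hy, rfl⟩]

theorem marginal_mul_div_marginal {X Y : Type*} [Fintype X] {P : X → Y → ℝ}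
    (hP : ∀ x y, 0 ≤ P x y) (x : X) (y : Y) :
    (∑ x', P x' y) * (P x y / ∑ x', P x' y) = P x y := by
  rcases eq_or_ne (∑ x', P x' y) 0 with h | h
  · rw [h, zero_mul, (sum_eq_zero_iff_of_nonneg fun x' _ ↦ hP x' y).1 h x (mem_univ x)]
  · exact mul_div_cancel₀ _ h

theorem max_sub_div_le_sub_sq_div {c Q E : ℝ} (hc : 0 < c) (hQ0 : 0 ≤ Q) (hQ1 : Q ≤ 1)
    (hE : Q ^ 2 / c ≤ E) : max (E - Q / c) 0 ≤ E - Q ^ 2 / c :=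
  max_le (by gcongr; nlinarith) (sub_nonneg.2 hE)

/-- Jensen's inequality with variance gain for `M P_{X|Y}(x|y)` over the pairs `(x, y)` with
`x ∈ G y`, weighted by `P_Y(y) / M`. -/
theorem StrongConvexOn.le_sum_sum_marginal_mul_of_card_eq {X Y : Type*} [Fintype X]
    [Fintype Y] {P : X → Y → ℝ} {D : Set ℝ} {f : ℝ → ℝ} {m M c : ℝ}
    (hf : StrongConvexOn D m f) (hm : 0 ≤ m) (hM : 0 < M) (hc : 0 < c)
    (hP : ∀ x y, 0 ≤ P x y) (hPsum : ∑ x, ∑ y, P x y = 1)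
    (hD : ∀ x y, 0 < ∑ x', P x' y → M * (P x y / ∑ x', P x' y) ∈ D)
    (G : Y → Finset X) (hG : ∀ y, ((G y).card : ℝ) = c) :
    c / M * f (M * (∑ y, ∑ x ∈ G y, P x y) / c)
      + m / 2 * M * max (∑ y, ∑ x ∈ G y, P x y * (P x y / ∑ x', P x' y)
          - (∑ y, ∑ x ∈ G y, P x y) / c) 0
      ≤ ∑ y, ∑ x ∈ G y, (∑ x', P x' y) * (1 / M * f (M * (P x y / ∑ x', P x' y))) := by
  set Q := ∑ y, ∑ x ∈ G y, P x y
  set E := ∑ y, ∑ x ∈ G y, P x y * (P x y / ∑ x', P x' y)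
  have hp0 : ∀ y, 0 ≤ ∑ x', P x' y := fun y ↦ sum_nonneg fun x _ ↦ hP x y
  have hp1 : ∑ y, ∑ x', P x' y = 1 := by rw [sum_comm, hPsum]
  have hQ0 : 0 ≤ Q := sum_nonneg fun y _ ↦ sum_nonneg fun x _ ↦ hP x y
  have hQ1 : Q ≤ 1 := hp1 ▸ sum_le_sum fun y _ ↦
    sum_le_sum_of_subset_of_nonneg (subset_univ _) fun x _ _ ↦ hP x y
  let w : (Σ _ : Y, X) → ℝ := fun z ↦ (∑ x', P x' z.1) / M
  let t : (Σ _ : Y, X) → ℝ := fun z ↦ M * (P z.2 z.1 / ∑ x', P x' z.1)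
  have hw : ∑ z ∈ univ.sigma G, w z = c / M := by
    simp only [w, sum_sigma, sum_const, nsmul_eq_mul, hG, ← sum_div, ← mul_sum, hp1, mul_one]
  have hW : 0 < ∑ z ∈ univ.sigma G, w z := hw ▸ div_pos hc hM
  have hwt1 : ∀ z, w z * t z = P z.2 z.1 := fun z ↦ by
    rw [← marginal_mul_div_marginal hP z.2 z.1]
    simp only [w, t]
    field_simp
  have hwt : ∑ z ∈ univ.sigma G, w z * t z = Q := by simp only [sum_sigma, hwt1, Q]
  have hwt2 : ∑ z ∈ univ.sigma G, w z * t z ^ 2 = M * E := by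
    simp only [sq, ← mul_assoc, hwt1, sum_sigma, mul_sum, E]
    exact sum_congr rfl fun y _ ↦ sum_congr rfl fun x _ ↦ by ring
  have hwf : ∑ z ∈ univ.sigma G, w z * f (t z)
      = ∑ y, ∑ x ∈ G y, (∑ x', P x' y) * (1 / M * f (M * (P x y / ∑ x', P x' y))) := by
    rw [sum_sigma]
    exact sum_congr rfl fun y _ ↦ sum_congr rfl fun x _ ↦ by ring
  have hmean : (univ.sigma G).centerMass w t = M * Q / c := by
    rw [centerMass, hw]
    simp only [smul_eq_mul, hwt]
    field_simp
  have hw0 : ∀ z ∈ univ.sigma G, 0 ≤ w z := fun z _ ↦ div_nonneg (hp0 z.1) hM.le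
  have hJ := hf.map_centerMass_add_le hw0 hW
    fun z _ hz ↦ hD z.2 z.1 ((hp0 z.1).lt_of_ne' (div_ne_zero_iff.1 hz).1)
  have hvar := sum_mul_centerMass_sq_le_sum_mul_sq (t := t) hw0 hW.ne'
  have hsq : c / M * (M * Q / c) ^ 2 = M * (Q ^ 2 / c) := by field_simp
  rw [hw, hwf, hwt2, hmean, hsq, ← mul_sub] at hJ
  rw [hw, hwt2, hmean, hsq] at hvar
  calc c / M * f (M * Q / c) + m / 2 * M * max (E - Q / c) 0
      ≤ c / M * f (M * Q / c) + m / 2 * M * (E - Q ^ 2 / c) := by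
        gcongr
        exact max_sub_div_le_sub_sq_div hc hQ0 hQ1 (le_of_mul_le_mul_left hvar hM)
    _ ≤ _ := by rwa [mul_assoc]

theorem refined_generalized_fano_f_divergence_general
    {X Y : Type*} [Fintype X] [Fintype Y] [DecidableEq X]
    (M L : ℕ) (hM : Fintype.card X = M) (hL1 : 1 ≤ L) (hLM : L < M)
    (P : X → Y → ℝ) (hP : ∀ x y, 0 ≤ P x y) (hPsum : ∑ x, ∑ y, P x y = 1)
    (Lst : Y → Finset X) (hLst : ∀ y, (Lst y).card = L)
    (f : ℝ → ℝ)
    (hf0 : Filter.Tendsto f (nhdsWithin 0 (Set.Ioi 0)) (nhds (f 0)))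
    (hd1 : ∀ t ∈ Set.Ioi (0 : ℝ), DifferentiableAt ℝ f t)
    (hd2 : ∀ t ∈ Set.Ioi (0 : ℝ), DifferentiableAt ℝ (deriv f) t)
    (ξ₁ ξ₂ : ℝ)
    (hξ₁ : ξ₁ = (M : ℝ) * sInf {p : ℝ | ∃ x y, 0 < ∑ x', P x' y ∧
                    p = P x y / ∑ x', P x' y})
    (hξ₂ : ξ₂ = (M : ℝ) * sSup {p : ℝ | ∃ x y, 0 < ∑ x', P x' y ∧
                    p = P x y / ∑ x', P x' y})
    (mf : ℝ) (hmf : 0 < mf)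
    (hf'' : ∀ t ∈ Set.Icc ξ₁ ξ₂ ∩ Set.Ioi 0, mf ≤ deriv (deriv f) t)
    (PL : ℝ) (hPL : PL = ∑ y, ∑ x ∈ (Lst y)ᶜ, P x y) :
    ∑ y, (∑ x, P x y) *
        (∑ x : X, (1 / (M : ℝ)) * f ((P x y / ∑ x', P x' y) / (1 / (M : ℝ))))
      ≥ ((L : ℝ) / M) * f ((M : ℝ) * (1 - PL) / L)
        + (1 - (L : ℝ) / M) * f ((M : ℝ) * PL / ((M : ℝ) - L))
        + (1 / 2) * mf * M *
            max ((∑ y, ∑ x, P x y * (P x y / ∑ x', P x' y))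
                  - (1 - PL) / L - PL / ((M : ℝ) - L)) 0 := by
  have hMpos : (0 : ℝ) < M := by exact_mod_cast (Nat.zero_lt_one.trans_le hL1).trans hLM
  have hLpos : (0 : ℝ) < L := by exact_mod_cast hL1
  have hMLpos : (0 : ℝ) < M - L := sub_pos.2 (by exact_mod_cast hLM)
  have hconv := strongConvexOn_Icc_inter_Ici hf0 hd1 hd2 hf''
  have hD : ∀ x y, 0 < ∑ x', P x' y →
      M * (P x y / ∑ x', P x' y) ∈ Icc ξ₁ ξ₂ ∩ Ici 0 :=
    fun x y hy ↦ hξ₁ ▸ hξ₂ ▸ mul_div_marginal_mem_Icc hP hMpos.le hy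
  have hin := hconv.le_sum_sum_marginal_mul_of_card_eq hmf.le hMpos hLpos hP hPsum hD Lst
    fun y ↦ by rw [hLst]
  have hout := hconv.le_sum_sum_marginal_mul_of_card_eq hmf.le hMpos hMLpos hP hPsum hD
    (fun y ↦ (Lst y)ᶜ) fun y ↦ by rw [card_compl, hLst, hM, Nat.cast_sub hLM.le]
  have hQ : ∑ y, ∑ x ∈ Lst y, P x y = 1 - PL := by
    rw [eq_sub_iff_add_eq, hPL, sum_sum_add_sum_sum_compl Lst fun y x ↦ P x y, sum_comm, hPsum]
  rw [hQ] at hin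
  rw [← hPL] at hout
  set E₁ := ∑ y, ∑ x ∈ Lst y, P x y * (P x y / ∑ x', P x' y)
  set E₂ := ∑ y, ∑ x ∈ (Lst y)ᶜ, P x y * (P x y / ∑ x', P x' y)
  have hmax : max (E₁ + E₂ - (1 - PL) / L - PL / ((M : ℝ) - L)) 0
      ≤ max (E₁ - (1 - PL) / L) 0 + max (E₂ - PL / ((M : ℝ) - L)) 0 :=
    max_le (by linarith [le_max_left (E₁ - (1 - PL) / L) 0, le_max_left (E₂ - PL / (M - L)) 0])
      (by positivity)
  have hgain := mul_le_mul_of_nonneg_left hmax (by positivity : (0 : ℝ) ≤ mf / 2 * M)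
  have hdiv : ∀ a : ℝ, a / (1 / M) = M * a := fun a ↦ by
    rw [one_div, div_inv_eq_mul, mul_comm]
  simp only [hdiv, mul_sum]
  rw [← sum_sum_add_sum_sum_compl Lst, ← sum_sum_add_sum_sum_compl Lst,
    show (1 : ℝ) - L / M = (M - L) / M by field_simp]
  linarith

/-- **Refined generalized Fano inequality for fixed-size list decoding** (strong
data-processing refinement).  `P x y` is the joint pmf `P_{XY}`, `Lst` is a fixed-size
list decoder with lists of cardinality `L`, the convex function `f` is twice
differentiable on `(0,∞)` with `f'' ≥ m_f > 0` on `[ξ₁*, ξ₂*] ∩ (0,∞)`, where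
`ξ₁* = M · inf P_{X|Y}` and `ξ₂* = M · sup P_{X|Y}` (inf/sup over pairs `(x,y)` with
`P_Y(y) > 0`).  The last term involves the positive part `u⁺ = max u 0`. -/
theorem refined_generalized_fano_f_divergence
    {X Y : Type*} [Fintype X] [Fintype Y] [DecidableEq X]
    (M L : ℕ) (hM : Fintype.card X = M) (hL1 : 1 ≤ L) (hLM : L < M)
    (P : X → Y → ℝ) (hP : ∀ x y, 0 ≤ P x y) (hPsum : ∑ x, ∑ y, P x y = 1)
    (Lst : Y → Finset X) (hLst : ∀ y, (Lst y).card = L)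
    (f : ℝ → ℝ) (hf : ConvexOn ℝ (Set.Ioi 0) f) (hf1 : f 1 = 0)
    (hf0 : Filter.Tendsto f (nhdsWithin 0 (Set.Ioi 0)) (nhds (f 0)))
    (hd1 : ∀ t ∈ Set.Ioi (0 : ℝ), DifferentiableAt ℝ f t)
    (hd2 : ∀ t ∈ Set.Ioi (0 : ℝ), DifferentiableAt ℝ (deriv f) t)
    (ξ₁ ξ₂ : ℝ)
    (hξ₁ : ξ₁ = (M : ℝ) * sInf {p : ℝ | ∃ x y, 0 < ∑ x', P x' y ∧
                    p = P x y / ∑ x', P x' y})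
    (hξ₂ : ξ₂ = (M : ℝ) * sSup {p : ℝ | ∃ x y, 0 < ∑ x', P x' y ∧
                    p = P x y / ∑ x', P x' y})
    (mf : ℝ) (hmf : 0 < mf)
    (hf'' : ∀ t ∈ Set.Icc ξ₁ ξ₂ ∩ Set.Ioi 0, mf ≤ deriv (deriv f) t)
    (PL : ℝ) (hPL : PL = ∑ y, ∑ x ∈ (Lst y)ᶜ, P x y) :
    ∑ y, (∑ x, P x y) *
        (∑ x : X, (1 / (M : ℝ)) * f ((P x y / ∑ x', P x' y) / (1 / (M : ℝ))))
      ≥ ((L : ℝ) / M) * f ((M : ℝ) * (1 - PL) / L)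
        + (1 - (L : ℝ) / M) * f ((M : ℝ) * PL / ((M : ℝ) - L))
        + (1 / 2) * mf * M *
            max ((∑ y, ∑ x, P x y * (P x y / ∑ x', P x' y))
                  - (1 - PL) / L - PL / ((M : ℝ) - L)) 0 :=
  refined_generalized_fano_f_divergence_general M L hM hL1 hLM P hP hPsum Lst hLst f hf0 hd1 hd2 ξ₁
    ξ₂ hξ₁ hξ₂ mf hmf hf'' PL hPL
end

section
/- Let $P_{XY}$ be a joint probability mass function on $\mathcal{X}\times\mathcal{Y}$ with $|\mathcal{X}|=M$ finite and $\mathcal{Y}$ finite, and let $1\le L<M$. Suppose the list decoder $\mathcal{L}\colon\mathcal{Y}\to\binom{\mathcal{X}}{L}$ selects, for every $y\in\mathcal{Y}$, the $L$ most probable elements of $\mathcal{X}$ given $Y=y$ (ties resolved arbitrarily), and let $P_{\mathcal{L}}=\mathbb{P}[X\notin\mathcal{L}(Y)]$. Let $f\colon(0,\infty)\to\mathbb{R}$ be convex with $f(1)=0$ and twice differentiable, with $f''(t)\ge m_f>0$ for all $t\in[\xi_1^*,\xi_2^*]\cap(0,\infty)$, where $\xi_1^*=M\inf_{(x,y)}P_{X|Y}(x|y)$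 and $\xi_2^*=M\sup_{(x,y)}P_{X|Y}(x|y)$. Then $\mathbb{E}\bigl[D_f(P_{X|Y}(\cdot|Y)\,\|\,U_M)\bigr]\;\ge\;\frac{L}{M}\,f\!\left(\frac{M(1-P_{\mathcal{L}})}{L}\right)+\left(1-\frac{L}{M}\right)f\!\left(\frac{M P_{\mathcal{L}}}{M-L}\right)+\tfrac12 m_f M\left(\mathbb{E}[P_{X|Y}(X|Y)]-\frac{1-P_{\mathcal{L}}}{L}\right)$. -/
/-!
Condition on `Y = y` and write `q = P_{X|Y}(·|y)`, `ε` for the conditional probability that `X`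
misses the list `S`. Applying Jensen's inequality to `f - m_f t² / 2` (convex on the range of
`M q`) separately on `S` and on `Sᶜ` bounds `D_f(q ‖ U_M)` below by the two-point divergence
between `(1 - ε, ε)` and `(L/M, 1 - L/M)`, plus `m_f/2` times the spread of `M q` inside each part.
Because the list holds the `L` most probable symbols, `L ε ≤ (M - L)(1 - ε)`, and this is exactly
what makes the two spreads add up to at least `M² (∑ q² - (1 - ε)/L)`. Finally the two-point
divergence is convex in `ε`, so averaging over `y` and using Jensen once more replaces `ε` by `P_𝓛`.
-/

open Finset Filter Topology

lemma strongConvexOn_iff_convexOn_sub_sq {s : Set ℝ} {m : ℝ} {f : ℝ → ℝ} :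
    StrongConvexOn s m f ↔ ConvexOn ℝ s fun x ↦ f x - m / 2 * x ^ 2 := by
  simp only [strongConvexOn_iff_convex, Real.norm_eq_abs, sq_abs]

lemma strongConvexOn_of_le_deriv_deriv {s : Set ℝ} {m : ℝ} {f : ℝ → ℝ} (hs : Convex ℝ s)
    (hf : ∀ t ∈ s, DifferentiableAt ℝ f t)
    (hf' : ∀ t ∈ interior s, DifferentiableAt ℝ (deriv f) t)
    (hm : ∀ t ∈ interior s, m ≤ deriv (deriv f) t) : StrongConvexOn s m f := by
  have hg : ∀ t ∈ s, HasDerivAt (fun x ↦ f x - m / 2 * x ^ 2) (deriv f t - m * t) t :=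
    fun t ht ↦ ((hf t ht).hasDerivAt.sub ((hasDerivAt_pow 2 t).const_mul (m / 2))).congr_deriv
      (by ring)
  rw [strongConvexOn_iff_convexOn_sub_sq]
  refine convexOn_of_hasDerivWithinAt2_nonneg hs
    (fun t ht ↦ (hg t ht).continuousAt.continuousWithinAt)
    (fun t ht ↦ (hg t (interior_subset ht)).hasDerivWithinAt)
    (fun t ht ↦ ((hf' t ht).hasDerivAt.sub ((hasDerivAt_id t).const_mul m)).hasDerivWithinAt)
    fun t ht ↦ by rw [mul_one]; exact sub_nonneg.2 (hm t ht)

/-- Slopes from `a` are limits of slopes from points `x' ↓ a`, where the three-slope inequality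
already holds. -/
lemma ConvexOn.inter_Ici_of_tendsto {s : Set ℝ} {f : ℝ → ℝ} {a : ℝ} (hs : Convex ℝ s)
    (hf : ConvexOn ℝ (s ∩ Set.Ioi a) f) (ha : Tendsto f (𝓝[>] a) (𝓝 (f a))) :
    ConvexOn ℝ (s ∩ Set.Ici a) f := by
  rw [convexOn_iff_slope_mono_adjacent] at hf ⊢
  refine ⟨hs.inter (convex_Ici a), ?_⟩
  intro x y z hx hz hxy hyz
  have hy : y ∈ s ∩ Set.Ioi a :=
    ⟨hs.ordConnected.out hx.1 hz.1 ⟨hxy.le, hyz.le⟩, lt_of_le_of_lt hx.2 hxy⟩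
  have hz' : z ∈ s ∩ Set.Ioi a := ⟨hz.1, hy.2.trans hyz⟩
  rcases eq_or_lt_of_le (Set.mem_Ici.1 hx.2) with rfl | hax
  · have hslope : Tendsto (fun x' ↦ (f y - f x') / (y - x')) (𝓝[>] a)
        (𝓝 ((f y - f a) / (y - a))) :=
      (tendsto_const_nhds.sub ha).div
        (tendsto_const_nhds.sub (tendsto_nhdsWithin_of_tendsto_nhds tendsto_id))
        (sub_ne_zero.2 hxy.ne')
    refine le_of_tendsto hslope ?_
    filter_upwards [Ioo_mem_nhdsGT hxy] with x' hx'
    exact hf.2 ⟨hs.ordConnected.out hx.1 hy.1 ⟨hx'.1.le, hx'.2.le⟩, hx'.1⟩ hz' hx'.2 hyz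
  · exact hf.2 ⟨hx.1, hax⟩ hz' hxy hyz

lemma StrongConvexOn.inter_Ici_of_tendsto {s : Set ℝ} {m : ℝ} {f : ℝ → ℝ} {a : ℝ}
    (hs : Convex ℝ s) (hf : StrongConvexOn (s ∩ Set.Ioi a) m f)
    (ha : Tendsto f (𝓝[>] a) (𝓝 (f a))) : StrongConvexOn (s ∩ Set.Ici a) m f := by
  rw [strongConvexOn_iff_convexOn_sub_sq] at hf ⊢
  exact hf.inter_Ici_of_tendsto hs
    (ha.sub (((continuous_pow 2).const_mul (m / 2)).tendsto a |>.mono_left nhdsWithin_le_nhds))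

lemma StrongConvexOn.card_mul_map_average_add_le {ι : Type*} {s : Set ℝ} {m : ℝ} {f : ℝ → ℝ}
    (hf : StrongConvexOn s m f) {T : Finset ι} (hT : T.Nonempty) {u : ι → ℝ}
    (hu : ∀ i ∈ T, u i ∈ s) :
    #T * f ((∑ i ∈ T, u i) / #T) + m / 2 * (∑ i ∈ T, u i ^ 2 - (∑ i ∈ T, u i) ^ 2 / #T)
      ≤ ∑ i ∈ T, f (u i) := by
  rw [strongConvexOn_iff_convexOn_sub_sq] at hf
  have hn : (0 : ℝ) < #T := by exact_mod_cast hT.card_pos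
  have hjensen := hf.map_sum_le (t := T) (w := fun _ ↦ (#T : ℝ)⁻¹) (p := u)
    (fun _ _ ↦ by positivity) (by simp [hn.ne']) hu
  simp only [smul_eq_mul, ← mul_sum] at hjensen
  rw [sum_sub_distrib, ← mul_sum, inv_mul_eq_div, inv_mul_eq_div, le_div_iff₀ hn] at hjensen
  have hsq : (∑ i ∈ T, u i) ^ 2 / #T = #T * ((∑ i ∈ T, u i) / #T) ^ 2 := by field_simp
  rw [hsq]
  linarith

lemma ConvexOn.comp_lineMap {s : Set ℝ} {f : ℝ → ℝ} (hf : ConvexOn ℝ s f) {a b : ℝ}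
    (ha : a ∈ s) (hb : b ∈ s) :
    ConvexOn ℝ (Set.Icc (0 : ℝ) 1) fun t ↦ f (AffineMap.lineMap a b t) :=
  (hf.comp_affineMap _).subset (fun _ ht ↦ hf.1.lineMap_mem ha hb ht) (convex_Icc 0 1)

lemma ConvexOn.map_sum_add_sum_le {ι : Type*} {t : Finset ι} {s : Set ℝ} {φ : ℝ → ℝ}
    (hφ : ConvexOn ℝ s φ) {w p g D : ι → ℝ} (hw : ∀ i ∈ t, 0 ≤ w i) (hw1 : ∑ i ∈ t, w i = 1)
    (hp : ∀ i ∈ t, p i ∈ s) (h : ∀ i ∈ t, 0 < w i → φ (p i) + g i ≤ D i) :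
    φ (∑ i ∈ t, w i * p i) + ∑ i ∈ t, w i * g i ≤ ∑ i ∈ t, w i * D i := by
  have hjensen : φ (∑ i ∈ t, w i * p i) ≤ ∑ i ∈ t, w i * φ (p i) := hφ.map_sum_le hw hw1 hp
  have hpointwise : ∑ i ∈ t, w i * (φ (p i) + g i) ≤ ∑ i ∈ t, w i * D i := by
    refine sum_le_sum fun i hi ↦ ?_
    rcases (hw i hi).eq_or_lt with hwi | hwi
    · simp [← hwi]
    · exact mul_le_mul_of_nonneg_left (h i hi hwi) hwi.le
  simp only [mul_add, sum_add_distrib] at hpointwise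
  linarith

lemma card_mul_sum_le_card_mul_sum {ι : Type*} {A B : Finset ι} {q : ι → ℝ}
    (h : ∀ i ∈ A, ∀ j ∈ B, q j ≤ q i) : #A * ∑ j ∈ B, q j ≤ #B * ∑ i ∈ A, q i :=
  calc #A * ∑ j ∈ B, q j = ∑ i ∈ A, ∑ j ∈ B, q j := by rw [sum_const, nsmul_eq_mul]
    _ ≤ ∑ i ∈ A, ∑ j ∈ B, q i := sum_le_sum fun i hi ↦ sum_le_sum fun j hj ↦ h i hi j hj
    _ = #B * ∑ i ∈ A, q i := by rw [sum_comm, sum_const, nsmul_eq_mul]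

/-- Also true when `∑ j, p j = 0`, where `p i / ∑ j, p j` is the junk value `0`. -/
lemma sum_mul_div_sum_of_nonneg {ι : Type*} [Fintype ι] {p : ι → ℝ} (hp : ∀ i, 0 ≤ p i)
    (i : ι) : (∑ j, p j) * (p i / ∑ j, p j) = p i := by
  rcases (sum_nonneg fun j _ ↦ hp j).eq_or_lt with h | h
  · rw [← h, zero_mul]
    exact ((sum_eq_zero_iff_of_nonneg fun j _ ↦ hp j).1 h.symm i (mem_univ i)).symm
  · exact mul_div_cancel₀ _ h.ne'

lemma mul_mem_Icc_mul_csInf_mul_csSup {X Y : Type*} [Finite X] [Finite Y] {g : X → Y → ℝ}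
    {p : Y → Prop} {c : ℝ} (hc : 0 ≤ c) {x : X} {y : Y} (hy : p y) :
    c * g x y ∈ Set.Icc (c * sInf {r | ∃ x y, p y ∧ r = g x y})
      (c * sSup {r | ∃ x y, p y ∧ r = g x y}) := by
  have hfin : {r | ∃ x y, p y ∧ r = g x y}.Finite :=
    (Set.finite_range fun z : X × Y ↦ g z.1 z.2).subset
      (by rintro _ ⟨x, y, -, rfl⟩; exact ⟨(x, y), rfl⟩)
  have hmem : g x y ∈ {r | ∃ x y, p y ∧ r = g x y} := ⟨x, y, hy, rfl⟩
  exact ⟨mul_le_mul_of_nonneg_left (csInf_le hfin.bddBelow hmem) hc,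
    mul_le_mul_of_nonneg_left (le_csSup hfin.bddAbove hmem) hc⟩

noncomputable def fDiv {X : Type*} [Fintype X] (f : ℝ → ℝ) (p q : X → ℝ) : ℝ :=
  ∑ x, q x * f (p x / q x)

lemma fDiv_uniform {X : Type*} [Fintype X] (f : ℝ → ℝ) (q : X → ℝ) (M : ℝ) :
    (fDiv f q fun _ ↦ 1 / M) = (∑ x, f (M * q x)) / M := by
  rw [fDiv, sum_div]
  exact sum_congr rfl fun x _ ↦ by
    rw [div_div_eq_mul_div, div_one, mul_comm (q x), one_div, inv_mul_eq_div]

/-- The `f`-divergence between the two-point distributions `(1 - ε, ε)` and `(L/M, 1 - L/M)`. -/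
noncomputable def fanoListBound (f : ℝ → ℝ) (M L : ℕ) (ε : ℝ) : ℝ :=
  (L : ℝ) / M * f ((M : ℝ) * (1 - ε) / L) + (1 - (L : ℝ) / M) * f ((M : ℝ) * ε / ((M : ℝ) - L))

lemma convexOn_fanoListBound {f : ℝ → ℝ} (hf : ConvexOn ℝ (Set.Ici 0) f) {M L : ℕ}
    (hLM : L < M) : ConvexOn ℝ (Set.Icc 0 1) (fanoListBound f M L) := by
  have hML : (L : ℝ) < M := by exact_mod_cast hLM
  have hM : (0 : ℝ) < M := by linarith [(L.cast_nonneg : (0 : ℝ) ≤ L)]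
  have hlist := (hf.comp_lineMap (a := M / L) (b := 0) (Set.mem_Ici.2 (by positivity))
    Set.self_mem_Ici).smul (c := (L : ℝ) / M) (by positivity)
  have hcompl := (hf.comp_lineMap (a := 0) (b := M / (M - L)) Set.self_mem_Ici
    (div_nonneg hM.le (sub_nonneg.2 hML.le))).smul (c := 1 - (L : ℝ) / M)
    (sub_nonneg.2 ((div_le_one hM).2 hML.le))
  refine (hlist.add hcompl).congr fun ε _ ↦ ?_
  simp only [fanoListBound, AffineMap.lineMap_apply_ring', smul_eq_mul, Pi.add_apply]
  ring_nf

theorem fanoListBound_add_le_fDiv_uniform {X : Type*} [Fintype X] [DecidableEq X]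
    {I : Set ℝ} {m : ℝ} {f : ℝ → ℝ} (hm : 0 ≤ m) (hf : StrongConvexOn I m f)
    {M L : ℕ} (hM : Fintype.card X = M) (hL : 0 < L) (hLM : L < M)
    {q : X → ℝ} (hq : ∀ x, 0 ≤ q x) (hq1 : ∑ x, q x = 1) (hqI : ∀ x, (M : ℝ) * q x ∈ I)
    {S : Finset X} (hS : #S = L) (hmap : ∀ x ∈ S, ∀ x' ∉ S, q x' ≤ q x) :
    fanoListBound f M L (∑ x ∈ Sᶜ, q x) + m / 2 * M * (∑ x, q x ^ 2 - (1 - ∑ x ∈ Sᶜ, q x) / L)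
      ≤ fDiv f q fun _ ↦ 1 / M := by
  have hL' : (0 : ℝ) < L := by exact_mod_cast hL
  have hML : (0 : ℝ) < M - L := sub_pos.2 (by exact_mod_cast hLM)
  have hM0 : (0 : ℝ) < M := by linarith
  obtain ⟨e, he⟩ : ∃ e, ∑ x ∈ Sᶜ, q x = e := ⟨_, rfl⟩
  rw [he]
  have hsplit : ∀ g : X → ℝ, ∑ x, g x = ∑ x ∈ S, g x + ∑ x ∈ Sᶜ, g x :=
    fun g ↦ (sum_add_sum_compl S g).symm
  have hlist : ∑ x ∈ S, q x = 1 - e := by linarith [hsplit q]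
  have hcard : (#Sᶜ : ℝ) = M - L := by rw [card_compl, hM, hS, Nat.cast_sub hLM.le]
  have hmass : L * e ≤ (M - L) * (1 - e) := by
    have := card_mul_sum_le_card_mul_sum (A := S) (B := Sᶜ) fun i hi j hj ↦
      hmap i hi j (mem_compl.1 hj)
    rwa [hcard, hlist, hS, he] at this
  have hquad : (1 - e) ^ 2 / L + e ^ 2 / (M - L) ≤ (1 - e) / L := by
    rw [div_add_div _ _ hL'.ne' hML.ne', div_le_div_iff₀ (by positivity) hL']
    nlinarith [mul_le_mul_of_nonneg_left hmass (he ▸ sum_nonneg fun x _ ↦ hq x : 0 ≤ e)]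
  have hgap : m / 2 * M ^ 2 * ((1 - e) ^ 2 / L + e ^ 2 / (M - L) - (1 - e) / L) ≤ 0 :=
    mul_nonpos_of_nonneg_of_nonpos (by positivity) (by linarith)
  have hin := hf.card_mul_map_average_add_le (T := S) (card_pos.1 (hS ▸ hL))
    (u := fun x ↦ M * q x) fun x _ ↦ hqI x
  have hout := hf.card_mul_map_average_add_le (T := Sᶜ) (card_pos.1 (by rw [card_compl]; omega))
    (u := fun x ↦ M * q x) fun x _ ↦ hqI x
  simp only [← mul_sum, mul_pow, hlist, hcard, hS, he] at hin hout
  rw [fDiv_uniform, le_div_iff₀ hM0, fanoListBound, hsplit (q · ^ 2), hsplit fun x ↦ f (M * q x)]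
  calc _ = ((L : ℝ) * f (M * (1 - e) / L)
          + m / 2 * (M ^ 2 * ∑ x ∈ S, q x ^ 2 - M ^ 2 * (1 - e) ^ 2 / L))
        + (((M : ℝ) - L) * f (M * e / (M - L))
          + m / 2 * (M ^ 2 * ∑ x ∈ Sᶜ, q x ^ 2 - M ^ 2 * e ^ 2 / (M - L)))
        + m / 2 * M ^ 2 * ((1 - e) ^ 2 / L + e ^ 2 / (M - L) - (1 - e) / L) := by
        field_simp
        ring
    _ ≤ _ := by linarith

theorem fanoListBound_add_le_sum_mul_fDiv {X Y : Type*} [Fintype X] [Fintype Y] [DecidableEq X]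
    {I : Set ℝ} {m : ℝ} {f : ℝ → ℝ} (hm : 0 ≤ m) (hconv : ConvexOn ℝ (Set.Ici 0) f)
    (hstrong : StrongConvexOn I m f) {M L : ℕ} (hM : Fintype.card X = M) (hL : 0 < L)
    (hLM : L < M) {P : X → Y → ℝ} (hP : ∀ x y, 0 ≤ P x y) (hPsum : ∑ x, ∑ y, P x y = 1)
    {Lst : Y → Finset X} (hLst : ∀ y, #(Lst y) = L)
    (hMAP : ∀ y, 0 < ∑ x', P x' y → ∀ x ∈ Lst y, ∀ x' ∉ Lst y,
      P x' y / ∑ x'', P x'' y ≤ P x y / ∑ x'', P x'' y)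
    (hI : ∀ x y, 0 < ∑ x', P x' y → (M : ℝ) * (P x y / ∑ x', P x' y) ∈ I) :
    fanoListBound f M L (∑ y, ∑ x ∈ (Lst y)ᶜ, P x y)
        + 1 / 2 * m * M * (∑ y, ∑ x, P x y * (P x y / ∑ x', P x' y)
          - (1 - ∑ y, ∑ x ∈ (Lst y)ᶜ, P x y) / L)
      ≤ ∑ y, (∑ x, P x y) * fDiv f (fun x ↦ P x y / ∑ x', P x' y) fun _ ↦ 1 / M := by
  set w : Y → ℝ := fun y ↦ ∑ x, P x y
  set q : Y → X → ℝ := fun y x ↦ P x y / w y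
  set ε : Y → ℝ := fun y ↦ ∑ x ∈ (Lst y)ᶜ, q y x
  have hw : ∀ y, 0 ≤ w y := fun y ↦ sum_nonneg fun x _ ↦ hP x y
  have hw1 : ∑ y, w y = 1 := by rw [sum_comm]; exact hPsum
  have hwq : ∀ y x, w y * q y x = P x y := fun y ↦ sum_mul_div_sum_of_nonneg (hP · y)
  have hε : ∀ y, ε y ∈ Set.Icc 0 1 := fun y ↦ by
    simp only [ε, q, ← sum_div]
    exact ⟨div_nonneg (sum_nonneg fun x _ ↦ hP x y) (hw y), div_le_one_of_le₀
      (sum_le_sum_of_subset_of_nonneg (subset_univ _) fun x _ _ ↦ hP x y) (hw y)⟩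
  have hpery : ∀ y ∈ univ, 0 < w y → fanoListBound f M L (ε y)
      + m / 2 * M * (∑ x, q y x ^ 2 - (1 - ε y) / L) ≤ fDiv f (q y) fun _ ↦ 1 / M :=
    fun y _ hy ↦ fanoListBound_add_le_fDiv_uniform hm hstrong hM hL hLM
      (fun x ↦ div_nonneg (hP x y) (hw y)) (by rw [← sum_div]; exact div_self hy.ne')
      (fun x ↦ hI x y hy) (hLst y) (hMAP y hy)
  have hPL : ∑ y, w y * ε y = ∑ y, ∑ x ∈ (Lst y)ᶜ, P x y := by simp only [ε, mul_sum, hwq]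
  have hsq : ∀ y, w y * ∑ x, q y x ^ 2 = ∑ x, P x y * q y x := fun y ↦ by
    simp only [mul_sum, sq, ← mul_assoc, hwq]
  have hspread : ∑ y, w y * (m / 2 * M * (∑ x, q y x ^ 2 - (1 - ε y) / L))
      = 1 / 2 * m * M * (∑ y, ∑ x, P x y * q y x - (1 - ∑ y, w y * ε y) / L) := by
    have hpt : ∀ y, w y * (m / 2 * M * (∑ x, q y x ^ 2 - (1 - ε y) / L))
        = 1 / 2 * m * M * (∑ x, P x y * q y x - (w y - w y * ε y) / L) := fun y ↦ by
      rw [← hsq]; ring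
    rw [sum_congr rfl fun y _ ↦ hpt y, ← mul_sum, sum_sub_distrib, ← sum_div, sum_sub_distrib,
      hw1]
  have hjensen := (convexOn_fanoListBound hconv hLM).map_sum_add_sum_le (fun y _ ↦ hw y) hw1
    (fun y _ ↦ hε y) hpery
  rwa [hspread, hPL] at hjensen

theorem refined_generalized_fano_f_divergence_map_decoder_general
    {X Y : Type*} [Fintype X] [Fintype Y] [DecidableEq X]
    (M L : ℕ) (hM : Fintype.card X = M) (hL1 : 1 ≤ L) (hLM : L < M)
    (P : X → Y → ℝ) (hP : ∀ x y, 0 ≤ P x y) (hPsum : ∑ x, ∑ y, P x y = 1)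
    (Lst : Y → Finset X) (hLst : ∀ y, (Lst y).card = L)
    (hMAP : ∀ y, 0 < ∑ x', P x' y → ∀ x ∈ Lst y, ∀ x' ∉ Lst y,
      P x' y / ∑ x'', P x'' y ≤ P x y / ∑ x'', P x'' y)
    (f : ℝ → ℝ) (hf : ConvexOn ℝ (Set.Ioi 0) f)
    (hf0 : Filter.Tendsto f (nhdsWithin 0 (Set.Ioi 0)) (nhds (f 0)))
    (hd1 : ∀ t ∈ Set.Ioi (0 : ℝ), DifferentiableAt ℝ f t)
    (hd2 : ∀ t ∈ Set.Ioi (0 : ℝ), DifferentiableAt ℝ (deriv f) t)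
    (ξ₁ ξ₂ : ℝ)
    (hξ₁ : ξ₁ = (M : ℝ) * sInf {p : ℝ | ∃ x y, 0 < ∑ x', P x' y ∧
                    p = P x y / ∑ x', P x' y})
    (hξ₂ : ξ₂ = (M : ℝ) * sSup {p : ℝ | ∃ x y, 0 < ∑ x', P x' y ∧
                    p = P x y / ∑ x', P x' y})
    (mf : ℝ) (hmf : 0 < mf)
    (hf'' : ∀ t ∈ Set.Icc ξ₁ ξ₂ ∩ Set.Ioi 0, mf ≤ deriv (deriv f) t)
    (PL : ℝ) (hPL : PL = ∑ y, ∑ x ∈ (Lst y)ᶜ, P x y) :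
    ∑ y, (∑ x, P x y) *
        (∑ x : X, (1 / (M : ℝ)) * f ((P x y / ∑ x', P x' y) / (1 / (M : ℝ))))
      ≥ ((L : ℝ) / M) * f ((M : ℝ) * (1 - PL) / L)
        + (1 - (L : ℝ) / M) * f ((M : ℝ) * PL / ((M : ℝ) - L))
        + (1 / 2) * mf * M *
            ((∑ y, ∑ x, P x y * (P x y / ∑ x', P x' y)) - (1 - PL) / L) := by
  have hconv : ConvexOn ℝ (Set.Ici 0) f := by
    simpa using ConvexOn.inter_Ici_of_tendsto convex_univ (by simpa using hf) hf0
  have hstrong : StrongConvexOn (Set.Icc ξ₁ ξ₂ ∩ Set.Ici 0) mf f :=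
    (strongConvexOn_of_le_deriv_deriv ((convex_Icc _ _).inter (convex_Ioi 0))
      (fun t ht ↦ hd1 t ht.2) (fun t ht ↦ hd2 t (interior_subset ht).2)
      fun t ht ↦ hf'' t (interior_subset ht)).inter_Ici_of_tendsto (convex_Icc _ _) hf0
  have hrange : ∀ x y, 0 < ∑ x', P x' y →
      (M : ℝ) * (P x y / ∑ x', P x' y) ∈ Set.Icc ξ₁ ξ₂ ∩ Set.Ici 0 := by
    intro x y hy
    subst hξ₁ hξ₂
    exact ⟨mul_mem_Icc_mul_csInf_mul_csSup (g := fun x y ↦ P x y / ∑ x', P x' y)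
      M.cast_nonneg hy, mul_nonneg M.cast_nonneg (div_nonneg (hP x y) hy.le)⟩
  subst hPL
  exact fanoListBound_add_le_sum_mul_fDiv hmf.le hconv hstrong hM hL1 hLM hP hPsum hLst hMAP
    hrange

/-- **Refined generalized Fano inequality for the maximum-a-posteriori (MAP) fixed-size
list decoder.**  The list decoder `Lst` selects, for every observation `y` (with
`P_Y(y) > 0`), the `L` most probable elements of `X` given `Y = y`; in this case the
positive-part operation in the refinement can be dropped together with the term
`PL/(M-L)`, strengthening the bound. -/
theorem refined_generalized_fano_f_divergence_map_decoder
    {X Y : Type*} [Fintype X] [Fintype Y] [DecidableEq X]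
    (M L : ℕ) (hM : Fintype.card X = M) (hL1 : 1 ≤ L) (hLM : L < M)
    (P : X → Y → ℝ) (hP : ∀ x y, 0 ≤ P x y) (hPsum : ∑ x, ∑ y, P x y = 1)
    (Lst : Y → Finset X) (hLst : ∀ y, (Lst y).card = L)
    (hMAP : ∀ y, 0 < ∑ x', P x' y → ∀ x ∈ Lst y, ∀ x' ∉ Lst y,
      P x' y / ∑ x'', P x'' y ≤ P x y / ∑ x'', P x'' y)
    (f : ℝ → ℝ) (hf : ConvexOn ℝ (Set.Ioi 0) f) (hf1 : f 1 = 0)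
    (hf0 : Filter.Tendsto f (nhdsWithin 0 (Set.Ioi 0)) (nhds (f 0)))
    (hd1 : ∀ t ∈ Set.Ioi (0 : ℝ), DifferentiableAt ℝ f t)
    (hd2 : ∀ t ∈ Set.Ioi (0 : ℝ), DifferentiableAt ℝ (deriv f) t)
    (ξ₁ ξ₂ : ℝ)
    (hξ₁ : ξ₁ = (M : ℝ) * sInf {p : ℝ | ∃ x y, 0 < ∑ x', P x' y ∧
                    p = P x y / ∑ x', P x' y})
    (hξ₂ : ξ₂ = (M : ℝ) * sSup {p : ℝ | ∃ x y, 0 < ∑ x', P x' y ∧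
                    p = P x y / ∑ x', P x' y})
    (mf : ℝ) (hmf : 0 < mf)
    (hf'' : ∀ t ∈ Set.Icc ξ₁ ξ₂ ∩ Set.Ioi 0, mf ≤ deriv (deriv f) t)
    (PL : ℝ) (hPL : PL = ∑ y, ∑ x ∈ (Lst y)ᶜ, P x y) :
    ∑ y, (∑ x, P x y) *
        (∑ x : X, (1 / (M : ℝ)) * f ((P x y / ∑ x', P x' y) / (1 / (M : ℝ))))
      ≥ ((L : ℝ) / M) * f ((M : ℝ) * (1 - PL) / L)
        + (1 - (L : ℝ) / M) * f ((M : ℝ) * PL / ((M : ℝ) - L))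
        + (1 / 2) * mf * M *
            ((∑ y, ∑ x, P x y * (P x y / ∑ x', P x' y)) - (1 - PL) / L) :=
  refined_generalized_fano_f_divergence_map_decoder_general M L hM hL1 hLM P hP hPsum Lst hLst hMAP
    f hf hf0 hd1 hd2 ξ₁ ξ₂ hξ₁ hξ₂ mf hmf hf'' PL hPL
end

section
/- Let $P_{XY}$ be a joint probability mass function on $\mathcal{X}\times\mathcal{Y}$ with $|\mathcal{X}|=M$ finite and $\mathcal{Y}$ finite. Let $\mathcal{L}\colon\mathcal{Y}\to 2^{\mathcal{X}}$ be a variable-size list decoder with $|\mathcal{L}(y)|\ge 1$ for all $y\in\mathcal{Y}$, and let $P_{\mathcal{L}}=\mathbb{P}[X\notin\mathcal{L}(Y)]$. Then $H(X|Y)\;\le\;h(P_{\mathcal{L}})+\mathbb{E}[\log|\mathcal{L}(Y)|]+P_{\mathcal{L}}\log M$. -/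
open scoped BigOperators

private lemma gibbs_term (p r : ℝ) (hp : 0 ≤ p) (hr : 0 ≤ r) (h : 0 < p → 0 < r) :
    p - r ≤ p * (Real.log p - Real.log r) := by
  rcases eq_or_lt_of_le hp with h0 | h0
  · simp [← h0]; linarith
  · have hr' := h h0
    have hlog := Real.log_le_sub_one_of_pos (show 0 < r / p by positivity)
    rw [Real.log_div hr'.ne' h0.ne'] at hlog
    have h2 : p * (Real.log r - Real.log p) ≤ r - p := by
      have h3 := mul_le_mul_of_nonneg_left hlog h0.le
      have h4 : p * (r / p - 1) = r - p := by field_simp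
      linarith
    have h5 : p * (Real.log p - Real.log r) = -(p * (Real.log r - Real.log p)) := by ring
    linarith

/-- **Generalized Fano inequality for variable-size list decoding** (Ahlswede–Körner):
for a list decoder `Lst : Y → Finset X` with nonempty lists and list decoding error
probability `PL = ℙ[X ∉ Lst(Y)]`,
`H(X|Y) ≤ h(PL) + 𝔼[log |Lst(Y)|] + PL · log M`,
where `h` is the binary entropy function. -/
theorem generalized_fano_variable_list_size
    {X Y : Type*} [Fintype X] [Fintype Y] [DecidableEq X]
    (M : ℕ) (hM : Fintype.card X = M)
    (P : X → Y → ℝ) (hP : ∀ x y, 0 ≤ P x y) (hPsum : ∑ x, ∑ y, P x y = 1)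
    (Lst : Y → Finset X) (hLst : ∀ y, 1 ≤ (Lst y).card)
    (PL : ℝ) (hPL : PL = ∑ y, ∑ x ∈ (Lst y)ᶜ, P x y) :
    -∑ y, ∑ x, P x y * Real.log (P x y / ∑ x', P x' y)
      ≤ Real.binEntropy PL
        + (∑ y, (∑ x, P x y) * Real.log ((Lst y).card))
        + PL * Real.log M := by
  classical
  have hY : Nonempty Y := by
    by_contra h
    rw [not_nonempty_iff] at h
    simp [Finset.univ_eq_empty] at hPsum
  have hM1 : 1 ≤ M := by
    obtain ⟨y⟩ := hY
    have := hLst y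
    have hcard : (Lst y).card ≤ Fintype.card X := Finset.card_le_univ _
    omega
  have hMpos : (0:ℝ) < M := by exact_mod_cast hM1
  set a : Y → ℝ := fun y => ∑ x ∈ Lst y, P x y with ha
  set b : Y → ℝ := fun y => ∑ x ∈ (Lst y)ᶜ, P x y with hb
  have ha0 : ∀ y, 0 ≤ a y := fun y => Finset.sum_nonneg fun x _ => hP x y
  have hb0 : ∀ y, 0 ≤ b y := fun y => Finset.sum_nonneg fun x _ => hP x y
  have hsplit : ∀ y, (∑ x, P x y) = a y + b y := fun y =>
    (Finset.sum_add_sum_compl (Lst y) (fun x => P x y)).symm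
  have htot : ∑ y, (∑ x, P x y) = 1 := by rw [Finset.sum_comm]; exact hPsum
  have hPLb : PL = ∑ y, b y := hPL
  have haPL : ∑ y, a y = 1 - PL := by
    have h1 : ∑ y, (a y + b y) = 1 := by
      rw [← htot]; exact Finset.sum_congr rfl fun y _ => (hsplit y).symm
    rw [Finset.sum_add_distrib] at h1
    rw [hPLb]; linarith
  have hPL0 : 0 ≤ PL := by
    rw [hPLb]; exact Finset.sum_nonneg fun y _ => hb0 y
  have hPL1 : PL ≤ 1 := by
    have := Finset.sum_nonneg (fun y (_ : y ∈ Finset.univ) => ha0 y)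
    linarith [haPL]
  set q : Y → X → ℝ := fun y x => if x ∈ Lst y then (1 - PL) / (Lst y).card else PL / M
    with hq
  have hcardpos : ∀ y, (0:ℝ) < (Lst y).card := fun y => by exact_mod_cast hLst y
  have hcard1 : ∀ y, (1:ℝ) ≤ (Lst y).card := fun y => by exact_mod_cast hLst y
  have hq0 : ∀ y x, 0 ≤ q y x := by
    intro y x
    by_cases hx : x ∈ Lst y
    · simp only [hq, hx, if_true]
      exact div_nonneg (by linarith) (hcardpos y).le
    · simp only [hq, hx, if_false]
      exact div_nonneg hPL0 hMpos.le
  have hqsum : ∀ y, ∑ x, q y x ≤ 1 := by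
    intro y
    rw [← Finset.sum_add_sum_compl (Lst y)]
    have e1 : ∀ x ∈ Lst y, q y x = (1 - PL) / (Lst y).card := fun x hx => by
      simp only [hq, hx, if_true]
    have e2 : ∀ x ∈ (Lst y)ᶜ, q y x = PL / M := fun x hx => by
      simp only [hq, Finset.mem_compl.mp hx, if_false]
    have h1 : ∑ x ∈ Lst y, q y x = 1 - PL := by
      rw [Finset.sum_congr rfl e1, Finset.sum_const, nsmul_eq_mul]
      field_simp
      exact mul_div_cancel_left₀ _ (hcardpos y).ne'
    have h2 : ∑ x ∈ (Lst y)ᶜ, q y x = ((Lst y)ᶜ.card : ℝ) * (PL / M) := by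
      rw [Finset.sum_congr rfl e2, Finset.sum_const, nsmul_eq_mul]
    have h3 : ((Lst y)ᶜ.card : ℝ) ≤ M := by
      have h := (Finset.card_le_univ ((Lst y)ᶜ)).trans_eq hM
      exact_mod_cast h
    have h4 : ((Lst y)ᶜ.card : ℝ) * (PL / M) ≤ PL := by
      have h5 : ((Lst y)ᶜ.card : ℝ) * (PL / M) ≤ (M:ℝ) * (PL / M) :=
        mul_le_mul_of_nonneg_right h3 (div_nonneg hPL0 hMpos.le)
      have h6 : (M:ℝ) * (PL / M) = PL := by field_simp
      linarith
    rw [h1, h2]; linarith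
  have hqpos : ∀ y x, 0 < P x y → 0 < q y x := by
    intro y x hpx
    by_cases hx : x ∈ Lst y
    · have h1 : P x y ≤ a y := Finset.single_le_sum (f := fun x => P x y)
        (fun i _ => hP i y) hx
      have h2 : a y ≤ ∑ y', a y' :=
        Finset.single_le_sum (f := a) (fun i _ => ha0 i) (Finset.mem_univ y)
      have h3 : 0 < 1 - PL := by rw [← haPL]; linarith
      simp only [hq, hx, if_true]
      exact div_pos h3 (hcardpos y)
    · have h1 : P x y ≤ b y := Finset.single_le_sum (f := fun x => P x y)
        (fun i _ => hP i y) (Finset.mem_compl.mpr hx)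
      have h2 : b y ≤ PL := by
        rw [hPLb]
        exact Finset.single_le_sum (f := b) (fun i _ => hb0 i) (Finset.mem_univ y)
      have h3 : 0 < PL := lt_of_lt_of_le hpx (le_trans h1 h2)
      simp only [hq, hx, if_false]
      positivity
  -- Gibbs step
  have gibbs : ∀ y, -∑ x, P x y * Real.log (P x y / ∑ x', P x' y)
      ≤ -∑ x, P x y * Real.log (q y x) := by
    intro y
    rw [neg_le_neg_iff]
    have key : 0 ≤ ∑ x, (P x y * Real.log (P x y / ∑ x', P x' y)
        - P x y * Real.log (q y x)) := by
      set s : ℝ := ∑ x', P x' y with hs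
      have hs0 : 0 ≤ s := Finset.sum_nonneg fun x _ => hP x y
      have hterm : ∀ x, P x y - s * q y x
          ≤ P x y * Real.log (P x y / s) - P x y * Real.log (q y x) := by
        intro x
        rcases eq_or_lt_of_le (hP x y) with h0 | h0
        · rw [← h0]
          simp
          exact mul_nonneg hs0 (hq0 y x)
        · have hspos : 0 < s := lt_of_lt_of_le h0
            (Finset.single_le_sum (f := fun x' => P x' y) (fun i _ => hP i y)
              (Finset.mem_univ x))
          have hqp := hqpos y x h0
          have hgt := gibbs_term (P x y) (s * q y x) (hP x y) (by positivity)
            (fun _ => by positivity)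
          calc P x y - s * q y x
              ≤ P x y * (Real.log (P x y) - Real.log (s * q y x)) := hgt
            _ = P x y * Real.log (P x y / s) - P x y * Real.log (q y x) := by
                rw [Real.log_mul hspos.ne' hqp.ne', Real.log_div h0.ne' hspos.ne']
                ring
      calc (0:ℝ) ≤ s * (1 - ∑ x, q y x) := by
            have := hqsum y
            apply mul_nonneg hs0; linarith
        _ = ∑ x, (P x y - s * q y x) := by
            rw [Finset.sum_sub_distrib, ← Finset.mul_sum]
            ring
        _ ≤ _ := Finset.sum_le_sum fun x _ => hterm x
    rw [Finset.sum_sub_distrib] at key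
    linarith
  -- value of the q-side
  have hqval : ∀ y, ∑ x, P x y * Real.log (q y x)
      = a y * Real.log ((1 - PL) / (Lst y).card) + b y * Real.log (PL / M) := by
    intro y
    have e1 : ∀ x ∈ Lst y, P x y * Real.log (q y x)
        = P x y * Real.log ((1 - PL) / (Lst y).card) := fun x hx => by
      simp only [hq, hx, if_true]
    have e2 : ∀ x ∈ (Lst y)ᶜ, P x y * Real.log (q y x)
        = P x y * Real.log (PL / M) := fun x hx => by
      simp only [hq, Finset.mem_compl.mp hx, if_false]
    rw [← Finset.sum_add_sum_compl (Lst y), Finset.sum_congr rfl e1,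
      Finset.sum_congr rfl e2, ← Finset.sum_mul, ← Finset.sum_mul]
  calc -∑ y, ∑ x, P x y * Real.log (P x y / ∑ x', P x' y)
      = ∑ y, -∑ x, P x y * Real.log (P x y / ∑ x', P x' y) := by
        rw [Finset.sum_neg_distrib]
    _ ≤ ∑ y, -∑ x, P x y * Real.log (q y x) :=
        Finset.sum_le_sum fun y _ => gibbs y
    _ = -∑ y, (a y * Real.log ((1 - PL) / (Lst y).card) + b y * Real.log (PL / M)) := by
        rw [← Finset.sum_neg_distrib]
        exact Finset.sum_congr rfl fun y _ => by rw [hqval y]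
    _ = (∑ y, a y * (Real.log ((Lst y).card) - Real.log (1 - PL)))
          - PL * Real.log (PL / M) := by
        rw [Finset.sum_add_distrib, neg_add, ← Finset.sum_mul, ← hPLb]
        congr 1
        rw [← Finset.sum_neg_distrib]
        apply Finset.sum_congr rfl
        intro y _
        rcases eq_or_lt_of_le hPL1 with h1 | h1
        · have hay : a y = 0 := by
            have h2 : ∑ y', a y' = 0 := by rw [haPL, ← h1]; ring
            have h3 := Finset.single_le_sum (f := a) (fun i _ => ha0 i) (Finset.mem_univ y)
            linarith [ha0 y]
          simp [hay]
        · rw [Real.log_div (sub_pos.mpr h1).ne' (hcardpos y).ne']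
          ring
    _ ≤ (∑ y, (a y + b y) * Real.log ((Lst y).card))
          - (∑ y, a y) * Real.log (1 - PL) - PL * Real.log (PL / M) := by
        have h1 : ∀ y, a y * (Real.log ((Lst y).card) - Real.log (1 - PL))
            ≤ (a y + b y) * Real.log ((Lst y).card) - a y * Real.log (1 - PL) := by
          intro y
          have hlog : 0 ≤ Real.log ((Lst y).card) := Real.log_nonneg (hcard1 y)
          nlinarith [mul_nonneg (hb0 y) hlog]
        have h2 := Finset.sum_le_sum (s := Finset.univ) fun y _ => h1 y
        have h3 : ∑ y, ((a y + b y) * Real.log ((Lst y).card) - a y * Real.log (1 - PL))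
            = (∑ y, (a y + b y) * Real.log ((Lst y).card))
              - (∑ y, a y) * Real.log (1 - PL) := by
          rw [Finset.sum_sub_distrib, ← Finset.sum_mul]
        linarith
    _ ≤ Real.binEntropy PL + (∑ y, (∑ x, P x y) * Real.log ((Lst y).card))
          + PL * Real.log M := by
        have hsum_eq : ∑ y, (a y + b y) * Real.log ((Lst y).card)
            = ∑ y, (∑ x, P x y) * Real.log ((Lst y).card) :=
          Finset.sum_congr rfl fun y _ => by rw [hsplit y]
        have hPLM : PL * Real.log (PL / M) = PL * Real.log PL - PL * Real.log M := by
          rcases eq_or_lt_of_le hPL0 with h0 | h0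
          · simp [← h0]
          · rw [Real.log_div h0.ne' hMpos.ne']; ring
        have hbin : Real.binEntropy PL
            = -(PL * Real.log PL) - (1 - PL) * Real.log (1 - PL) := by
          rw [Real.binEntropy, Real.log_inv, Real.log_inv]; ring
        rw [hsum_eq, haPL, hPLM, hbin]
        exact le_of_eq (by ring)
end

section
/- Let $P_{XY}$ be a joint probability mass function on $\mathcal{X}\times\mathcal{Y}$ with $|\mathcal{X}|=M$ finite and $\mathcal{Y}$ finite. Let $\mathcal{L}\colon\mathcal{Y}\to 2^{\mathcal{X}}$ be a variable-size list decoder with $|\mathcal{L}(y)|\ge 1$ for all $y$, and let $P_{\mathcal{L}}=\mathbb{P}[X\notin\mathcal{L}(Y)]$. Then, for every $\gamma\ge 1$, $\;P_{\mathcal{L}}\;\ge\;\frac{1+\gamma}{2}-\frac{\gamma\,\mathbb{E}[|\mathcal{L}(Y)|]}{M}-\frac12\,\mathbb{E}\!\left[\sum_{x\in\mathcal{X}}\Bigl|P_{X|Y}(x|Y)-\frac{\gamma}{M}\Bigr|\right]$. -/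
open scoped BigOperators

lemma core_list_bound {X : Type*} [Fintype X] [DecidableEq X] (M : ℕ) (hM : Fintype.card X = M)
    (hMpos : 0 < M) (γ : ℝ) (p : X → ℝ) (hsum : ∑ x, p x = 1) (L : Finset X) :
    ∑ x ∈ Lᶜ, p x ≥ (1 + γ) / 2 - γ * L.card / M - (1 / 2) * ∑ x, |p x - γ / M| := by
  classical
  have hmax : ∀ t : ℝ, max t 0 = (t + |t|) / 2 := by
    intro t
    rcases le_total t 0 with h | h
    · rw [max_eq_right h, abs_of_nonpos h]; ring
    · rw [max_eq_left h, abs_of_nonneg h]; ring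
  have h1 : ∑ x ∈ L, (p x - γ / M) ≤ ∑ x, max (p x - γ / M) 0 := by
    calc ∑ x ∈ L, (p x - γ / M) ≤ ∑ x ∈ L, max (p x - γ / M) 0 :=
          Finset.sum_le_sum fun x _ => le_max_left _ _
      _ ≤ ∑ x, max (p x - γ / M) 0 :=
          Finset.sum_le_sum_of_subset_of_nonneg (L.subset_univ)
            (fun x _ _ => le_max_right _ _)
  have hconst : ∑ _x : X, γ / M = γ := by
    rw [Finset.sum_const, Finset.card_univ, hM, nsmul_eq_mul]
    field_simp
  have h2 : ∑ x, max (p x - γ / M) 0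
      = ((1 - γ) + ∑ x, |p x - γ / M|) / 2 := by
    have : ∑ x, max (p x - γ / M) 0 = ∑ x, ((p x - γ / M) + |p x - γ / M|) / 2 := by
      refine Finset.sum_congr rfl fun x _ => hmax _
    rw [this, ← Finset.sum_div, Finset.sum_add_distrib, Finset.sum_sub_distrib,
      hsum, hconst]
  have h3 : ∑ x ∈ L, (p x - γ / M) = ∑ x ∈ L, p x - γ / M * L.card := by
    rw [Finset.sum_sub_distrib, Finset.sum_const, nsmul_eq_mul]; ring
  have h4 : ∑ x ∈ L, p x + ∑ x ∈ Lᶜ, p x = 1 := by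
    rw [Finset.sum_add_sum_compl, hsum]
  rw [h3] at h1
  rw [h2] at h1
  have h5 : γ * (L.card : ℝ) / M = γ / M * L.card := by ring
  linarith

/-- **Lower bound on the variable-size list decoding error probability via the
`E_γ` divergence:** for every `γ ≥ 1`,
`P_ℒ ≥ (1+γ)/2 - γ·𝔼[|ℒ(Y)|]/M - (1/2)·𝔼[∑_x |P_{X|Y}(x|Y) - γ/M|]`. -/
theorem list_decoding_error_lower_bound_E_gamma
    {X Y : Type*} [Fintype X] [Fintype Y] [DecidableEq X]
    (M : ℕ) (hM : Fintype.card X = M)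
    (P : X → Y → ℝ) (hP : ∀ x y, 0 ≤ P x y) (hPsum : ∑ x, ∑ y, P x y = 1)
    (Lst : Y → Finset X) (hLst : ∀ y, 1 ≤ (Lst y).card)
    (PL : ℝ) (hPL : PL = ∑ y, ∑ x ∈ (Lst y)ᶜ, P x y)
    (γ : ℝ) (hγ : 1 ≤ γ) :
    PL ≥ (1 + γ) / 2 - γ * (∑ y, (∑ x, P x y) * ((Lst y).card : ℝ)) / M
        - (1 / 2) * ∑ y, (∑ x, P x y) *
            ∑ x, |P x y / (∑ x', P x' y) - γ / M| := by
  classical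
  have hMpos : 0 < M := by
    rcases Nat.eq_zero_or_pos M with h0 | h; swap
    · exact h
    · exfalso
      have hXe : IsEmpty X := Fintype.card_eq_zero_iff.mp (hM.trans h0)
      simp [Finset.univ_eq_empty] at hPsum
  set Q : Y → ℝ := fun y => ∑ x, P x y with hQdef
  have hQ0 : ∀ y, 0 ≤ Q y := fun y => Finset.sum_nonneg fun x _ => hP x y
  have hQsum : ∑ y, Q y = 1 := by
    rw [← hPsum]; exact (Finset.sum_comm).symm
  have key : ∀ y, ∑ x ∈ (Lst y)ᶜ, P x y ≥
      Q y * ((1 + γ) / 2) - γ * (Q y * ((Lst y).card : ℝ)) / M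
        - (1 / 2) * (Q y * ∑ x, |P x y / Q y - γ / M|) := by
    intro y
    rcases eq_or_lt_of_le (hQ0 y) with hq | hq
    · have hz : ∀ x ∈ (Finset.univ : Finset X), P x y = 0 := by
        intro x hx
        have := (Finset.sum_eq_zero_iff_of_nonneg (fun x _ => hP x y)).mp hq.symm
        exact this x hx
      have hL : ∑ x ∈ (Lst y)ᶜ, P x y = 0 :=
        Finset.sum_eq_zero fun x _ => hz x (Finset.mem_univ x)
      rw [hL, ← hq]; ring_nf; simp
    · have hqne : Q y ≠ 0 := ne_of_gt hq
      have hpsum : ∑ x, P x y / Q y = 1 := by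
        rw [← Finset.sum_div]; exact div_self hqne
      have hcore := core_list_bound M hM hMpos γ (fun x => P x y / Q y) hpsum (Lst y)
      have hmul := mul_le_mul_of_nonneg_left hcore (hQ0 y)
      have heq : Q y * ∑ x ∈ (Lst y)ᶜ, P x y / Q y = ∑ x ∈ (Lst y)ᶜ, P x y := by
        rw [Finset.mul_sum]
        exact Finset.sum_congr rfl fun x _ => mul_div_cancel₀ _ hqne
      rw [heq] at hmul
      calc ∑ x ∈ (Lst y)ᶜ, P x y
          ≥ Q y * ((1 + γ) / 2 - γ * ((Lst y).card : ℝ) / M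
              - (1 / 2) * ∑ x, |P x y / Q y - γ / M|) := hmul
        _ = Q y * ((1 + γ) / 2) - γ * (Q y * ((Lst y).card : ℝ)) / M
              - (1 / 2) * (Q y * ∑ x, |P x y / Q y - γ / M|) := by ring
  have hsum_le : ∑ y, (Q y * ((1 + γ) / 2) - γ * (Q y * ((Lst y).card : ℝ)) / M
        - (1 / 2) * (Q y * ∑ x, |P x y / Q y - γ / M|)) ≤ PL := by
    rw [hPL]
    exact Finset.sum_le_sum fun y _ => key y
  have hrw : ∑ y, (Q y * ((1 + γ) / 2) - γ * (Q y * ((Lst y).card : ℝ)) / M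
        - (1 / 2) * (Q y * ∑ x, |P x y / Q y - γ / M|))
      = (1 + γ) / 2 - γ * (∑ y, Q y * ((Lst y).card : ℝ)) / M
        - (1 / 2) * ∑ y, Q y * ∑ x, |P x y / Q y - γ / M| := by
    rw [Finset.sum_sub_distrib, Finset.sum_sub_distrib, ← Finset.sum_mul, hQsum,
      ← Finset.mul_sum, ← Finset.sum_div, ← Finset.mul_sum]
    ring
  rw [hrw] at hsum_le
  exact hsum_le
end

section
/- Let $P_{XY}$ be a joint probability mass function on $\mathcal{X}\times\mathcal{Y}$ with $|\mathcal{X}|=M$ finite and $\mathcal{Y}$ finite, let $\gamma\ge 1$, and let $\mathcal{L}\colon\mathcal{Y}\to 2^{\mathcal{X}}$ be a variable-size list decoder with $1\le|\mathcal{L}(y)|\le M/\gamma$ for all $y\in\mathcal{Y}$. Suppose that for every $y\in\mathcal{Y}$ (with $P_Y(y)>0$) the decoder selects the $|\mathcal{L}(y)|$ most probable elements of $\mathcal{X}$ given $Y=y$, and that, denoting by $x_\ell(y)$ the $\ell$-th most probable element of $\mathcal{X}$ given $Y=y$ (ties resolved arbitrarily), the conditional pmf satisfies $P_{X|Y}(x_\ell(y)|y)=\alpha(y)$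 for $\ell\in\{1,\ldots,|\mathcal{L}(y)|\}$ and $P_{X|Y}(x_\ell(y)|y)=\frac{1-\alpha(y)|\mathcal{L}(y)|}{M-|\mathcal{L}(y)|}$ for $\ell\in\{|\mathcal{L}(y)|+1,\ldots,M\}$, for some function $\alpha\colon\mathcal{Y}\to[0,1]$ with $\frac{\gamma}{M}\le\alpha(y)\le\frac{1}{|\mathcal{L}(y)|}$ for all $y$. Then equality holds: $P_{\mathcal{L}}\;=\;\frac{1+\gamma}{2}-\frac{\gamma\,\mathbb{E}[|\mathcal{L}(Y)|]}{M}-\frac12\,\mathbb{E}\!\left[\sum_{x\in\mathcal{X}}\Bigl|P_{X|Y}(x|Y)-\frac{\gamma}{M}\Bigr|\right]$, where $P_{\mathcal{L}}=\mathbb{P}[X\notin\mathcal{L}(Y)]$. -/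
open scoped BigOperators

/-- **Equality condition for the `E_γ`-based lower bound on the variable-size list
decoding error probability.**  If, for every `y` (with `P_Y(y) > 0`), the decoder selects
the `|ℒ(y)|` most probable elements of `X` given `Y = y`, the conditional pmf equals
`α(y)` on the list and `(1 - α(y)|ℒ(y)|)/(M - |ℒ(y)|)` off the list, with
`γ/M ≤ α(y) ≤ 1/|ℒ(y)|` and `1 ≤ |ℒ(y)| ≤ M/γ`, then the lower bound holds with
equality. -/
theorem list_decoding_error_E_gamma_equality
    {X Y : Type*} [Fintype X] [Fintype Y] [DecidableEq X]
    (M : ℕ) (hM : Fintype.card X = M)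
    (P : X → Y → ℝ) (hP : ∀ x y, 0 ≤ P x y) (hPsum : ∑ x, ∑ y, P x y = 1)
    (γ : ℝ) (hγ : 1 ≤ γ)
    (Lst : Y → Finset X)
    (hLst : ∀ y, 1 ≤ (Lst y).card ∧ ((Lst y).card : ℝ) ≤ (M : ℝ) / γ)
    (hMAP : ∀ y, 0 < ∑ x', P x' y → ∀ x ∈ Lst y, ∀ x' ∉ Lst y,
      P x' y / ∑ x'', P x'' y ≤ P x y / ∑ x'', P x'' y)
    (α : Y → ℝ) (hα01 : ∀ y, 0 ≤ α y ∧ α y ≤ 1)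
    (hα : ∀ y, γ / M ≤ α y ∧ α y ≤ 1 / ((Lst y).card : ℝ))
    (hpmf : ∀ y, 0 < ∑ x', P x' y →
      (∀ x ∈ Lst y, P x y / ∑ x', P x' y = α y) ∧
      (∀ x ∉ Lst y, P x y / ∑ x', P x' y
          = (1 - α y * ((Lst y).card : ℝ)) / ((M : ℝ) - ((Lst y).card : ℝ))))
    (PL : ℝ) (hPL : PL = ∑ y, ∑ x ∈ (Lst y)ᶜ, P x y) :
    PL = (1 + γ) / 2 - γ * (∑ y, (∑ x, P x y) * ((Lst y).card : ℝ)) / M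
        - (1 / 2) * ∑ y, (∑ x, P x y) *
            ∑ x, |P x y / (∑ x', P x' y) - γ / M| := by
  have hPsum' : ∑ y, ∑ x, P x y = 1 := by rw [Finset.sum_comm]; exact hPsum
  -- Y is nonempty (else the total probability would be 0)
  have hY : Nonempty Y := by
    by_contra h
    rw [not_nonempty_iff] at h
    simp [Finset.univ_eq_empty] at hPsum'
  obtain ⟨y0⟩ := hY
  have hM1 : 1 ≤ M := by
    calc 1 ≤ (Lst y0).card := (hLst y0).1
    _ ≤ Fintype.card X := (Lst y0).card_le_univ.trans_eq (by simp)
    _ = M := hM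
  have hMpos : (0:ℝ) < (M:ℝ) := by exact_mod_cast hM1
  -- the per-`y` identity
  have key : ∀ y, ∑ x ∈ (Lst y)ᶜ, P x y =
      (∑ x, P x y) * ((1 + γ) / 2 - γ * ((Lst y).card : ℝ) / M
        - (1 / 2) * ∑ x, |P x y / (∑ x', P x' y) - γ / M|) := by
    intro y
    by_cases hpy : 0 < ∑ x', P x' y
    · obtain ⟨h1, h2⟩ := hpmf y hpy
      set py : ℝ := ∑ x', P x' y with hpydef
      set L : ℝ := ((Lst y).card : ℝ) with hLdef
      have hcardle : (Lst y).card ≤ M := by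
        rw [← hM, ← Finset.card_univ]; exact Finset.card_le_univ _
      have hLM : L ≤ (M:ℝ) := by rw [hLdef]; exact_mod_cast hcardle
      have hL1 : (1:ℝ) ≤ L := by rw [hLdef]; exact_mod_cast (hLst y).1
      have hsum1 : ∑ x, P x y / py = 1 := by
        rw [← Finset.sum_div]; exact div_self hpy.ne'
      have hin : ∑ x ∈ Lst y, P x y / py = L * α y := by
        rw [Finset.sum_congr rfl h1, Finset.sum_const, nsmul_eq_mul]
      have hout : ∑ x ∈ (Lst y)ᶜ, P x y / py = 1 - L * α y := by
        have := Finset.sum_add_sum_compl (Lst y) (fun x => P x y / py)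
        rw [hin, hsum1] at this
        linarith
      have houtP : ∑ x ∈ (Lst y)ᶜ, P x y = py * (1 - L * α y) := by
        rw [← hout, Finset.mul_sum]
        exact Finset.sum_congr rfl fun x _ => (mul_div_cancel₀ _ hpy.ne').symm
      have habs_in : ∑ x ∈ Lst y, |P x y / py - γ / M| = L * (α y - γ / M) := by
        have : ∀ x ∈ Lst y, |P x y / py - γ / M| = α y - γ / M := by
          intro x hx
          rw [h1 x hx, abs_of_nonneg (sub_nonneg.2 (hα y).1)]
        rw [Finset.sum_congr rfl this, Finset.sum_const, nsmul_eq_mul]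
      have habs_out : ∑ x ∈ (Lst y)ᶜ, |P x y / py - γ / M|
          = γ / M * ((M:ℝ) - L) - (1 - L * α y) := by
        by_cases hc : (Lst y)ᶜ = (∅ : Finset X)
        · have hLeM : L = (M:ℝ) := by
            have : Lst y = Finset.univ := by
              rwa [← Finset.compl_eq_empty_iff]
            rw [hLdef, this]
            simp [hM]
          have hMa : 1 - L * α y = 0 := by
            rw [hc] at hout; simpa using hout.symm
          rw [hc, Finset.sum_empty, hLeM]
          rw [hLeM] at hMa
          have hz : γ / (M:ℝ) * ((M:ℝ) - (M:ℝ)) = 0 := by ring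
          linarith
        · -- complement nonempty: L < M and the off-list mass is below γ/M
          have hLMlt : L < (M:ℝ) := by
            rcases Finset.nonempty_iff_ne_empty.2 hc with ⟨x, hx⟩
            have : (Lst y).card < Fintype.card X := by
              apply Finset.card_lt_card
              refine ⟨(Lst y).subset_univ, fun h => ?_⟩
              exact (Finset.mem_compl.1 hx) (h (Finset.mem_univ x))
            rw [hLdef, ← hM]; exact_mod_cast this
          have hβ : ∀ x ∈ (Lst y)ᶜ, P x y / py ≤ γ / M := by
            intro x hx
            rw [h2 x (Finset.mem_compl.1 hx)]
            rw [div_le_div_iff₀ (by linarith) hMpos]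
            have hαγ : γ / M ≤ α y := (hα y).1
            have : γ / M * L ≤ α y * L := by nlinarith
            have hγM : γ / M * (M:ℝ) = γ := by field_simp
            nlinarith
          have hcard : ((Lst y)ᶜ.card : ℝ) = (M:ℝ) - L := by
            rw [Finset.card_compl, hM, Nat.cast_sub hcardle]
          have : ∀ x ∈ (Lst y)ᶜ, |P x y / py - γ / M| = γ / M - P x y / py := by
            intro x hx
            rw [abs_of_nonpos (by linarith [hβ x hx]), neg_sub]
          rw [Finset.sum_congr rfl this, Finset.sum_sub_distrib,
            Finset.sum_const, nsmul_eq_mul, hcard, hout]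
          ring
      have habs : ∑ x, |P x y / py - γ / M|
          = L * (α y - γ / M) + (γ / M * ((M:ℝ) - L) - (1 - L * α y)) := by
        rw [← Finset.sum_add_sum_compl (Lst y) (fun x => |P x y / py - γ / M|),
          habs_in, habs_out]
      rw [houtP, habs]
      have hMne : (M:ℝ) ≠ 0 := hMpos.ne'
      field_simp
      ring
    · have hz : ∀ x, P x y = 0 := by
        have h0 : ∑ x', P x' y = 0 :=
          le_antisymm (not_lt.1 hpy) (Finset.sum_nonneg fun x _ => hP x y)
        intro x
        exact (Finset.sum_eq_zero_iff_of_nonneg (fun x _ => hP x y)).1 h0 x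
          (Finset.mem_univ x)
      simp [hz]
  rw [hPL, Finset.sum_congr rfl fun y _ => key y]
  simp only [mul_sub]
  rw [Finset.sum_sub_distrib, Finset.sum_sub_distrib]
  have hA : ∑ y, (∑ x, P x y) * ((1 + γ) / 2) = (1 + γ) / 2 := by
    rw [← Finset.sum_mul, hPsum', one_mul]
  have hB : ∑ y, (∑ x, P x y) * (γ * ((Lst y).card : ℝ) / M)
      = γ * (∑ y, (∑ x, P x y) * ((Lst y).card : ℝ)) / M := by
    rw [Finset.mul_sum, Finset.sum_div]
    exact Finset.sum_congr rfl fun y _ => by ring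
  have hC : ∑ y, (∑ x, P x y) * ((1 / 2) * ∑ x, |P x y / (∑ x', P x' y) - γ / M|)
      = (1 / 2) * ∑ y, (∑ x, P x y) * ∑ x, |P x y / (∑ x', P x' y) - γ / M| := by
    rw [Finset.mul_sum]
    exact Finset.sum_congr rfl fun y _ => by ring
  rw [hA, hB, hC]
end

section
/- Let $P_X$ be a probability mass function on a finite set $\mathcal{X}$, let $k\ge 1$, let $P_{X^k}(x^k)=\prod_{i=1}^k P_X(x_i)$ on $\mathcal{X}^k$, let $D\ge 2$ be an integer, and let $c\colon\mathcal{X}^k\to\{0,\ldots,D-1\}^*$ be a uniquely decodable code with codeword lengths $\ell(x^k)=|c(x^k)|$. Then, for every $\rho>0$, $\;\frac{\Lambda_k(\rho)}{\rho}\;\ge\;\frac{1}{\log D}\,H_{\frac{1}{1+\rho}}(X)$, where $\Lambda_k(\rho)=\frac1k\log_D\Bigl(\sum_{x^k\in\mathcal{X}^k}P_{X^k}(x^k)\,D^{\rho\,\ell(x^k)}\Bigr)$. -/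
/-! Let `p` be the block distribution, `α = 1/(1+ρ)` and `w = D^{-ℓ}` the Kraft weights. Writing
`p^α = w · (p^α / w)`, the weighted Hölder inequality with exponent `1 + ρ` gives
`(∑ p^α)^(1+ρ) ≤ (∑ w)^ρ · ∑ p D^{ρℓ}`, and `∑ w ≤ 1` by the Kraft–McMillan inequality.
Since the source is memoryless, `∑ p^α = (∑ P^α)^k`; taking logarithms gives the bound. -/

open scoped BigOperators

/-- A fixed-to-variable code `c` on blocks, with codewords that are finite strings over a
`D`-ary alphabet, is *uniquely decodable* if concatenation of codewords is injective on
finite sequences of source blocks. -/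
def UniquelyDecodable {A : Type*} {D : ℕ} (c : A → List (Fin D)) : Prop :=
  Function.Injective fun u : List A => (u.map c).flatten

namespace UniquelyDecodable

variable {A : Type*} {D : ℕ} {c : A → List (Fin D)}

theorem injective (hc : UniquelyDecodable c) : Function.Injective c := fun a b h => by
  simpa using @hc [a] [b] (by simpa using h)

theorem uniquelyDecodable_range (hc : UniquelyDecodable c) :
    InformationTheory.UniquelyDecodable (Set.range c) := by
  have : CanLift (List (Fin D)) A c (· ∈ Set.range c) := ⟨fun _ h => h⟩
  intro L₁ L₂ h₁ h₂ hflat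
  lift L₁ to List A using h₁
  lift L₂ to List A using h₂
  rw [hc hflat]

theorem sum_one_div_pow_length_le_one [Fintype A] [NeZero D] (hc : UniquelyDecodable c) :
    ∑ a, (1 / (D : ℝ)) ^ (c a).length ≤ 1 := by
  classical
  have := InformationTheory.kraft_mcmillan_inequality (S := Finset.univ.image c) (by
    simpa using hc.uniquelyDecodable_range)
  simpa [Finset.sum_image fun a _ b _ h => hc.injective h] using this

end UniquelyDecodable

namespace Real

theorem sum_rpow_inv_one_add_rpow_le_sum_mul_rpow_neg {ι : Type*} [Fintype ι] {q w : ι → ℝ}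
    {ρ : ℝ} (hq : ∀ i, 0 ≤ q i) (hw : ∀ i, 0 < w i) (hw_sum : ∑ i, w i ≤ 1) (hρ : 0 ≤ ρ) :
    (∑ i, q i ^ (1 + ρ)⁻¹) ^ (1 + ρ) ≤ ∑ i, q i * w i ^ (-ρ) := by
  have hρ₁ : 1 ≤ 1 + ρ := le_add_of_nonneg_right hρ
  have hρ₀ : 0 < 1 + ρ := by positivity
  have holder := inner_le_weight_mul_Lp_of_nonneg Finset.univ hρ₁
    w (fun i => q i ^ (1 + ρ)⁻¹ / w i) (fun i => (hw i).le)
    (fun i => div_nonneg (rpow_nonneg (hq i) _) (hw i).le)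
  have hterm : ∀ i, w i * (q i ^ (1 + ρ)⁻¹ / w i) = q i ^ (1 + ρ)⁻¹ := fun i =>
    mul_div_cancel₀ _ (hw i).ne'
  have hterm_pow : ∀ i, w i * (q i ^ (1 + ρ)⁻¹ / w i) ^ (1 + ρ) = q i * w i ^ (-ρ) := fun i => by
    rw [div_rpow (rpow_nonneg (hq i) _) (hw i).le, rpow_inv_rpow (hq i) hρ₀.ne',
      rpow_add (hw i), rpow_one, rpow_neg (hw i).le]
    field_simp [(hw i).ne']
  have hmoment : 0 ≤ ∑ i, q i * w i ^ (-ρ) :=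
    Finset.sum_nonneg fun i _ => mul_nonneg (hq i) (rpow_nonneg (hw i).le _)
  simp only [hterm, hterm_pow] at holder
  refine (le_rpow_inv_iff_of_pos (Finset.sum_nonneg fun i _ => rpow_nonneg (hq i) _)
    hmoment hρ₀).1 (holder.trans (mul_le_of_le_one_left (rpow_nonneg hmoment _) ?_))
  exact rpow_le_one (Finset.sum_nonneg fun i _ => (hw i).le) hw_sum
    (sub_nonneg.2 (inv_le_one_of_one_le₀ hρ₁))

theorem sum_prod_rpow_eq_pow {X : Type*} [Fintype X] {P : X → ℝ} (hP : ∀ x, 0 ≤ P x)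
    (k : ℕ) (α : ℝ) : ∑ v : Fin k → X, (∏ i, P (v i)) ^ α = (∑ x, P x ^ α) ^ k := by
  rw [Fintype.sum_pow]
  exact Finset.sum_congr rfl fun v _ => finsetProd_rpow _ _ (fun i _ => hP _) α |>.symm

end Real

/-- **Campbell's converse coding theorem.**  For a discrete memoryless source with
per-symbol pmf `P` on a finite alphabet and any uniquely decodable `D`-ary code on
source blocks of length `k` with codeword lengths `ℓ`, the scaled cumulant generating
function `Λ_k(ρ) = (1/k) log_D ∑ P_{X^k}(x^k) D^{ρ ℓ(x^k)}` satisfies, for every `ρ > 0`,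
`Λ_k(ρ)/ρ ≥ H_{1/(1+ρ)}(X) / log D`, where `H_α(X) = (1/(1-α)) log ∑ P(x)^α` is the
Rényi entropy. -/
theorem campbell_converse
    {𝒳 : Type*} [Fintype 𝒳]
    (P : 𝒳 → ℝ) (hP : ∀ x, 0 ≤ P x) (hPsum : ∑ x, P x = 1)
    (k : ℕ) (hk : 1 ≤ k) (D : ℕ) (hD : 2 ≤ D)
    (c : (Fin k → 𝒳) → List (Fin D)) (hc : UniquelyDecodable c)
    (ℓ : (Fin k → 𝒳) → ℕ) (hℓ : ∀ xk, ℓ xk = (c xk).length)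
    (ρ : ℝ) (hρ : 0 < ρ) :
    ((1 / (k : ℝ)) * Real.logb D
        (∑ xk : Fin k → 𝒳, (∏ i, P (xk i)) * (D : ℝ) ^ (ρ * (ℓ xk : ℝ)))) / ρ
      ≥ (1 / Real.log D) *
          ((1 - 1 / (1 + ρ))⁻¹ * Real.log (∑ x, P x ^ (1 / (1 + ρ)))) := by
  have : NeZero D := ⟨by omega⟩
  have hD₀ : (0 : ℝ) < D := by positivity
  set A := ∑ xk : Fin k → 𝒳, (∏ i, P (xk i)) * (D : ℝ) ^ (ρ * (ℓ xk : ℝ))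
  set S := ∑ x, P x ^ (1 / (1 + ρ))
  have hS : 0 < S := by
    obtain ⟨x, -, hx⟩ := Finset.exists_lt_of_sum_lt (s := Finset.univ) (f := 0) (g := P)
      (by simp [hPsum])
    exact Finset.sum_pos' (fun x _ => Real.rpow_nonneg (hP x) _)
      ⟨x, Finset.mem_univ x, Real.rpow_pos_of_pos hx _⟩
  have hS_le_A : (S ^ k) ^ (1 + ρ) ≤ A := by
    rw [← Real.sum_prod_rpow_eq_pow hP, one_div]
    convert Real.sum_rpow_inv_one_add_rpow_le_sum_mul_rpow_neg
      (fun v => Finset.prod_nonneg fun i _ => hP (v i))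
      (w := fun v => (1 / (D : ℝ)) ^ (c v).length) (fun v => by positivity)
      hc.sum_one_div_pow_length_le_one hρ.le using 3 with v
    rw [hℓ, one_div, inv_pow, Real.inv_rpow (by positivity), Real.rpow_neg (by positivity),
      inv_inv, ← Real.rpow_natCast, ← Real.rpow_mul hD₀.le, mul_comm]
  have hlog : (1 + ρ) * (k * Real.log S) ≤ Real.log A := by
    rw [← Real.log_pow, ← Real.log_rpow (by positivity)]
    exact Real.log_le_log (by positivity) hS_le_A
  have hlogD : 0 < Real.log D := Real.log_pos (by exact_mod_cast hD)
  have hk₀ : (0 : ℝ) < k := by exact_mod_cast hk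
  have hexp : (1 - 1 / (1 + ρ))⁻¹ = (1 + ρ) / ρ := by
    rw [one_sub_div (by positivity), add_sub_cancel_left, inv_div]
  rw [ge_iff_le, Real.logb, hexp]
  calc 1 / Real.log D * ((1 + ρ) / ρ * Real.log S)
      = (1 + ρ) * (k * Real.log S) / (k * ρ * Real.log D) := by field_simp
    _ ≤ Real.log A / (k * ρ * Real.log D) := by gcongr
    _ = 1 / k * (Real.log A / Real.log D) / ρ := by field_simp
end

section
/- Let $P_X$ be a probability mass function on a finite set $\mathcal{X}$, let $k\ge 1$, let $P_{X^k}(x^k)=\prod_{i=1}^k P_X(x_i)$ on $\mathcal{X}^k$, let $D\ge 2$ be an integer, and let $\rho>0$. Then there exists a uniquely decodable code $c\colon\mathcal{X}^k\to\{0,\ldots,D-1\}^*$ with codeword lengths $\ell(x^k)=|c(x^k)|$ such that $\;\frac{\Lambda_k(\rho)}{\rho}\;\le\;\frac{1}{\log D}\,H_{\frac{1}{1+\rho}}(X)+\frac1k$, where $\Lambda_k(\rho)=\frac1k\log_D\Bigl(\sum_{x^k\in\mathcal{X}^k}P_{X^k}(x^k)\,D^{\rho\,\ell(x^k)}\Bigr)$.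 -/
open scoped BigOperators

/-!
Take codeword lengths `ℓ b ≈ -log_D Q b` for the escort distribution
`Q b = P b ^ α / ∑ P ^ α`, `α = 1 / (1 + ρ)`, of the block distribution. Since `∑ D ^ (-ℓ) ≤ 1`,
Kraft's construction gives a prefix-free, hence uniquely decodable, code with these lengths, and
`P b * D ^ (ρ ℓ b) ≤ D ^ ρ * P b * Q b ^ (-ρ) = D ^ ρ * (∑ P ^ α) ^ ρ * P b ^ α`. Summing over `b`
gives `∑ P D ^ (ρ ℓ) ≤ D ^ ρ * (∑ P ^ α) ^ (1 + ρ)`; for blocks `∑ P ^ α` is the `k`-th power of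
its single-letter value, and taking `log_D` and dividing by `k ρ` yields the bound.
-/

open Finset

theorem uniquelyDecodable_of_prefixFree {A : Type*} {D : ℕ} (c : A → List (Fin D))
    (hne : ∀ a, c a ≠ []) (hpf : ∀ a b, c a <+: c b → a = b) : UniquelyDecodable c := by
  intro u v h
  induction u generalizing v with
  | nil => cases v with
    | nil => rfl
    | cons b v => simp_all
  | cons a u ih => cases v with
    | nil => simp_all
    | cons b v =>
      simp only [List.map_cons, List.flatten_cons] at h
      obtain rfl : a = b :=
        (List.prefix_or_prefix_of_prefix ⟨_, h⟩ (List.prefix_append _ _)).elim (hpf a b)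
          fun hba => (hpf b a hba).symm
      rw [ih (List.append_cancel_left h)]

theorem exists_length_eq_forall_not_prefix {ι α : Type*} [Fintype α] (s : Finset ι)
    (w : ι → List α) (L : ℕ)
    (hsum : ∑ i ∈ s, Fintype.card α ^ (L - (w i).length) < Fintype.card α ^ L) :
    ∃ v : List α, v.length = L ∧ ∀ i ∈ s, ¬ w i <+: v := by
  classical
  -- A word of length `L` with prefix `w i` is `w i ++ t` with `t` of length `L - |w i|`.
  let extensions (i : ι) : Finset (List α) :=
    univ.image fun t : List.Vector α (L - (w i).length) => w i ++ t.toList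
  let words : Finset (List α) := univ.image fun t : List.Vector α L => t.toList
  have hcard : #(s.biUnion extensions) < #words := by
    rw [card_image_of_injective _ List.Vector.toList_injective, card_univ, card_vector]
    refine (card_biUnion_le.trans (sum_le_sum fun i _ => ?_)).trans_lt hsum
    exact card_image_le.trans_eq (by rw [card_univ, card_vector])
  obtain ⟨v, hv, hv_bad⟩ := exists_mem_notMem_of_card_lt_card hcard
  obtain ⟨t, -, rfl⟩ := mem_image.mp hv
  refine ⟨t.toList, t.toList_length, fun i hi ⟨r, hr⟩ => hv_bad (mem_biUnion.mpr ⟨i, hi, ?_⟩)⟩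
  refine mem_image.mpr ⟨⟨r, ?_⟩, mem_univ _, hr⟩
  rw [← t.toList_length, ← hr, List.length_append]
  omega

-- Words are added in order of increasing length, so a new word only has to avoid having an
-- earlier word as a prefix.
theorem exists_prefixFree_of_sum_inv_pow_le_one {ι : Type*} {D : ℕ} (hD : 0 < D)
    (ℓ : ι → ℕ) (s : Finset ι) (hs : ∑ i ∈ s, ((D : ℝ) ^ ℓ i)⁻¹ ≤ 1) :
    ∃ c : ι → List (Fin D),
      (∀ i ∈ s, (c i).length = ℓ i) ∧ ∀ i ∈ s, ∀ j ∈ s, c i <+: c j → i = j := by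
  classical
  induction s using Finset.induction_on_max_value ℓ with
  | empty => exact ⟨fun _ => [], by simp, by simp⟩
  | insert a s ha hmax ih =>
    rw [sum_insert ha] at hs
    have hDa : (0 : ℝ) < (D : ℝ) ^ ℓ a := by positivity
    obtain ⟨c, hc_len, hc_pf⟩ := ih (by linarith [inv_pos.mpr hDa])
    have hsum : ∑ i ∈ s, Fintype.card (Fin D) ^ (ℓ a - (c i).length)
        < Fintype.card (Fin D) ^ ℓ a := by
      have hcast : ∀ i ∈ s, ((D ^ (ℓ a - ℓ i) : ℕ) : ℝ) = (D : ℝ) ^ ℓ a * ((D : ℝ) ^ ℓ i)⁻¹ :=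
        fun i hi => by rw [Nat.cast_pow, pow_sub₀ _ (by positivity) (hmax i hi)]
      simp only [Fintype.card_fin]
      rw [sum_congr rfl fun i hi => by rw [hc_len i hi], ← Nat.cast_lt (α := ℝ),
        Nat.cast_sum, sum_congr rfl hcast, ← mul_sum, Nat.cast_pow]
      nlinarith [mul_le_mul_of_nonneg_left hs hDa.le, mul_inv_cancel₀ hDa.ne']
    obtain ⟨v, hv_len, hv⟩ := exists_length_eq_forall_not_prefix s c (ℓ a) hsum
    have hv' : ∀ j ∈ s, ¬ v <+: c j := fun j hj hvj => hv j hj <|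
      (hvj.eq_of_length_le (by rw [hv_len, hc_len j hj]; exact hmax j hj)) ▸ List.prefix_refl v
    have hc' : ∀ i ∈ s, Function.update c a v i = c i := fun i hi =>
      Function.update_of_ne (ne_of_mem_of_not_mem hi ha) _ _
    refine ⟨Function.update c a v, fun i hi => ?_, fun i hi j hj hij => ?_⟩
    · rcases mem_insert.mp hi with rfl | hi_s
      · rw [Function.update_self, hv_len]
      · rw [hc' i hi_s, hc_len i hi_s]
    · rcases mem_insert.mp hi with rfl | hi_s <;> rcases mem_insert.mp hj with rfl | hj_s
      · rfl
      · rw [Function.update_self, hc' j hj_s] at hij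
        exact absurd hij (hv' j hj_s)
      · rw [Function.update_self, hc' i hi_s] at hij
        exact absurd hij (hv i hi_s)
      · rw [hc' i hi_s, hc' j hj_s] at hij
        exact hc_pf i hi_s j hj_s hij

theorem exists_uniquelyDecodable_of_sum_inv_pow_le_one {ι : Type*} [Fintype ι] {D : ℕ}
    (hD : 0 < D) (ℓ : ι → ℕ) (hℓ : ∀ i, 0 < ℓ i) (hkraft : ∑ i, ((D : ℝ) ^ ℓ i)⁻¹ ≤ 1) :
    ∃ c : ι → List (Fin D), UniquelyDecodable c ∧ ∀ i, (c i).length = ℓ i := by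
  obtain ⟨c, hc_len, hc_pf⟩ := exists_prefixFree_of_sum_inv_pow_le_one hD ℓ univ hkraft
  refine ⟨c, uniquelyDecodable_of_prefixFree c (fun i hi => (hℓ i).ne' ?_)
    fun i j => hc_pf i (mem_univ i) j (mem_univ j), fun i => hc_len i (mem_univ i)⟩
  rw [← hc_len i (mem_univ i), hi, List.length_nil]

theorem exists_pow_mul_mem_Ioc {q x : ℝ} (hq : 0 < q) (hq1 : q ≤ 1) (hx : 1 < x) :
    ∃ n : ℕ, 0 < n ∧ 1 < q * x ^ n ∧ q * x ^ n ≤ x := by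
  obtain ⟨n, hn_le, hn_lt⟩ := exists_nat_pow_near (one_le_inv_iff₀.mpr ⟨hq, hq1⟩) hx
  refine ⟨n + 1, n.succ_pos, ?_, ?_⟩
  · rwa [← inv_mul_lt_iff₀ hq, mul_one]
  · rw [pow_succ', mul_left_comm]
    exact mul_le_of_le_one_right (by positivity) ((le_inv_mul_iff₀ hq).mp (by simpa using hn_le))

theorem exists_sum_inv_pow_ite_le_one {ι : Type*} [Fintype ι] [DecidableEq ι] {x : ℝ}
    (hx : 1 < x) (s : Finset ι) (m : ι → ℕ) (hs : ∑ i ∈ s, (x ^ m i)⁻¹ < 1) :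
    ∃ L : ℕ, 0 < L ∧ ∑ i, (x ^ if i ∈ s then m i else L)⁻¹ ≤ 1 := by
  set K := ∑ i ∈ s, (x ^ m i)⁻¹
  obtain ⟨L, hL⟩ := pow_unbounded_of_one_lt (Fintype.card ι / (1 - K)) hx
  refine ⟨L + 1, L.succ_pos, ?_⟩
  have hL' : Fintype.card ι * (x ^ (L + 1))⁻¹ ≤ 1 - K := by
    rw [div_lt_iff₀ (sub_pos.mpr hs)] at hL
    rw [mul_inv_le_iff₀ (by positivity)]
    nlinarith [mul_le_mul_of_nonneg_left (pow_le_pow_right₀ hx.le (Nat.le_add_right L 1))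
      (sub_pos.mpr hs).le]
  calc ∑ i, (x ^ if i ∈ s then m i else L + 1)⁻¹
      = ∑ i, if i ∈ s then (x ^ m i)⁻¹ else (x ^ (L + 1))⁻¹ :=
        sum_congr rfl fun i _ => apply_ite (fun n => (x ^ n)⁻¹) _ _ _
    _ = K + #(univ.filter (· ∉ s)) * (x ^ (L + 1))⁻¹ := by
        rw [sum_ite, filter_mem_eq_inter, univ_inter, sum_const, nsmul_eq_mul]
    _ ≤ K + Fintype.card ι * (x ^ (L + 1))⁻¹ := by
        gcongr
        exact card_filter_le _ _
    _ ≤ 1 := by linarith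

theorem exists_kraft_lengths_of_sum_le_one {ι : Type*} [Fintype ι] {x : ℝ} (hx : 1 < x)
    (Q : ι → ℝ) (hQ : ∀ i, 0 ≤ Q i) (hQ1 : ∑ i, Q i ≤ 1) :
    ∃ ℓ : ι → ℕ, (∀ i, 0 < ℓ i) ∧ ∑ i, (x ^ ℓ i)⁻¹ ≤ 1 ∧ ∀ i, 0 < Q i → Q i * x ^ ℓ i ≤ x := by
  classical
  have hQ_le_one (i : ι) : Q i ≤ 1 := (single_le_sum (fun j _ => hQ j) (mem_univ i)).trans hQ1
  have (i : ι) : ∃ n : ℕ, 0 < Q i → 0 < n ∧ 1 < Q i * x ^ n ∧ Q i * x ^ n ≤ x :=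
    if hi : 0 < Q i then (exists_pow_mul_mem_Ioc hi (hQ_le_one i) hx).imp fun _ h _ => h
    else ⟨0, fun h => absurd h hi⟩
  choose m hm using this
  set s := univ.filter (0 < Q ·)
  -- `x ^ (-m i) < Q i` strictly on `s` leaves room in the Kraft sum for the indices with `Q i = 0`.
  have hs : ∑ i ∈ s, (x ^ m i)⁻¹ < 1 := by
    rcases s.eq_empty_or_nonempty with hs_empty | hs_ne
    · simp [hs_empty]
    calc ∑ i ∈ s, (x ^ m i)⁻¹
        < ∑ i ∈ s, Q i := sum_lt_sum_of_nonempty hs_ne fun i hi =>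
          (inv_lt_iff_one_lt_mul₀ (by positivity)).mpr (hm i (mem_filter.mp hi).2).2.1
      _ ≤ ∑ i, Q i := sum_le_sum_of_subset_of_nonneg (subset_univ s) fun i _ _ => hQ i
      _ ≤ 1 := hQ1
  obtain ⟨L, hL_pos, hL⟩ := exists_sum_inv_pow_ite_le_one hx s m hs
  refine ⟨fun i => if i ∈ s then m i else L, fun i => ?_, hL, fun i hi => ?_⟩
  · dsimp only
    split_ifs with hi
    exacts [(hm i (mem_filter.mp hi).2).1, hL_pos]
  · simpa [s, hi] using (hm i hi).2.2

theorem mul_rpow_le_of_div_mul_pow_le {p S x ρ : ℝ} {n : ℕ} (hp : 0 < p) (hS : 0 < S)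
    (hx : 0 < x) (hρ : 0 ≤ ρ) (h : p ^ (1 / (1 + ρ)) / S * x ^ n ≤ x) :
    p * x ^ (ρ * n) ≤ x ^ ρ * S ^ ρ * p ^ (1 / (1 + ρ)) := by
  set α := 1 / (1 + ρ)
  have hpα : 0 < p ^ α := Real.rpow_pos_of_pos hp α
  have hxn : x ^ n ≤ x * S / p ^ α := by
    rw [le_div_iff₀ hpα]
    rw [div_mul_eq_mul_div, div_le_iff₀ hS] at h
    linarith
  have hα : 1 - α * ρ = α := by
    simp only [α]
    field_simp
    ring
  calc p * x ^ (ρ * n) = p * (x ^ n) ^ ρ := by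
        rw [mul_comm ρ, Real.rpow_mul hx.le, Real.rpow_natCast]
    _ ≤ p * (x * S / p ^ α) ^ ρ := by gcongr
    _ = x ^ ρ * S ^ ρ * p ^ (1 - α * ρ) := by
        rw [Real.div_rpow (by positivity) hpα.le, Real.mul_rpow hx.le hS.le, ← Real.rpow_mul hp.le,
          Real.rpow_sub hp, Real.rpow_one]
        ring
    _ = x ^ ρ * S ^ ρ * p ^ α := by rw [hα]

theorem exists_uniquelyDecodable_sum_mul_rpow_length_le {ι : Type*} [Fintype ι] (p : ι → ℝ)
    (hp : ∀ i, 0 ≤ p i) {D : ℕ} (hD : 1 < D) {ρ : ℝ} (hρ : 0 ≤ ρ) :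
    ∃ c : ι → List (Fin D), UniquelyDecodable c ∧
      ∑ i, p i * (D : ℝ) ^ (ρ * ((c i).length : ℝ))
        ≤ (D : ℝ) ^ ρ * (∑ i, p i ^ (1 / (1 + ρ))) ^ (1 + ρ) := by
  set α := 1 / (1 + ρ)
  set S := ∑ i, p i ^ α
  have hpα (i : ι) : 0 ≤ p i ^ α := Real.rpow_nonneg (hp i) α
  have hS : 0 ≤ S := sum_nonneg fun i _ => hpα i
  have hDx : (1 : ℝ) < D := by exact_mod_cast hD
  obtain ⟨ℓ, hℓ_pos, hkraft, hℓ⟩ := exists_kraft_lengths_of_sum_le_one hDx (fun i => p i ^ α / S)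
    (fun i => div_nonneg (hpα i) hS) (by rw [← sum_div]; exact div_self_le_one S)
  obtain ⟨c, hc, hc_len⟩ :=
    exists_uniquelyDecodable_of_sum_inv_pow_le_one (by omega) ℓ hℓ_pos hkraft
  refine ⟨c, hc, ?_⟩
  have hterm (i : ι) : p i * (D : ℝ) ^ (ρ * ((c i).length : ℝ)) ≤ D ^ ρ * S ^ ρ * p i ^ α := by
    rcases (hp i).eq_or_lt with hpi | hpi
    · rw [← hpi, zero_mul]
      exact mul_nonneg (by positivity) (Real.rpow_nonneg le_rfl α)
    have hS_pos : 0 < S :=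
      (Real.rpow_pos_of_pos hpi α).trans_le (single_le_sum (fun j _ => hpα j) (mem_univ i))
    rw [hc_len]
    exact mul_rpow_le_of_div_mul_pow_le hpi hS_pos (by positivity) hρ
      (hℓ i (div_pos (Real.rpow_pos_of_pos hpi α) hS_pos))
  calc ∑ i, p i * (D : ℝ) ^ (ρ * ((c i).length : ℝ))
      ≤ ∑ i, D ^ ρ * S ^ ρ * p i ^ α := sum_le_sum fun i _ => hterm i
    _ = D ^ ρ * S ^ (1 + ρ) := by
        rw [← mul_sum, add_comm, Real.rpow_add' hS (by positivity), Real.rpow_one, mul_assoc]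

theorem sum_prod_rpow_eq_pow {𝒳 : Type*} [Fintype 𝒳] (P : 𝒳 → ℝ) (hP : ∀ x, 0 ≤ P x)
    (k : ℕ) (r : ℝ) : ∑ xk : Fin k → 𝒳, (∏ i, P (xk i)) ^ r = (∑ x, P x ^ r) ^ k := by
  rw [Fintype.sum_pow]
  exact sum_congr rfl fun xk _ => (Real.finsetProd_rpow _ _ (fun i _ => hP (xk i)) r).symm

theorem div_logb_le_of_le_mul_rpow {Λ S D ρ : ℝ} {k : ℕ} (hk : 1 ≤ k) (hD : 1 < D)
    (hρ : 0 < ρ) (hΛ : 0 < Λ) (hS : 0 < S) (h : Λ ≤ D ^ ρ * (S ^ k) ^ (1 + ρ)) :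
    (1 / (k : ℝ) * Real.logb D Λ) / ρ
      ≤ (1 / Real.log D) * ((1 - 1 / (1 + ρ))⁻¹ * Real.log S) + 1 / (k : ℝ) := by
  have hlog : Real.logb D Λ ≤ ρ + (1 + ρ) * (k * Real.logb D S) := by
    calc Real.logb D Λ ≤ Real.logb D (D ^ ρ * (S ^ k) ^ (1 + ρ)) :=
          Real.logb_le_logb_of_le hD hΛ h
      _ = ρ + (1 + ρ) * (k * Real.logb D S) := by
          rw [Real.logb_mul (by positivity) (by positivity), Real.logb_rpow (by positivity)
            hD.ne', Real.logb_rpow_eq_mul_logb_of_pos (by positivity), Real.logb_pow]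
  have hk0 : (0 : ℝ) < k := by exact_mod_cast hk
  have hlogD : Real.log D ≠ 0 := (Real.log_pos hD).ne'
  have hρ1 : 1 + ρ ≠ 0 := by positivity
  calc (1 / (k : ℝ) * Real.logb D Λ) / ρ
      ≤ (1 / k * (ρ + (1 + ρ) * (k * Real.logb D S))) / ρ := by gcongr
    _ = _ := by
        rw [Real.logb, one_sub_div hρ1, add_sub_cancel_left]
        field_simp
        ring

/-- **Campbell's achievability coding theorem.**  For a discrete memoryless source with
per-symbol pmf `P` on a finite alphabet, any block length `k ≥ 1`, alphabet size `D ≥ 2`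
and `ρ > 0`, there exists a uniquely decodable `D`-ary code on source blocks of length
`k` whose codeword lengths `ℓ` satisfy
`Λ_k(ρ)/ρ ≤ H_{1/(1+ρ)}(X)/log D + 1/k`, where
`Λ_k(ρ) = (1/k) log_D ∑ P_{X^k}(x^k) D^{ρ ℓ(x^k)}` and `H_α(X)` is the Rényi entropy. -/
theorem campbell_achievability
    {𝒳 : Type*} [Fintype 𝒳]
    (P : 𝒳 → ℝ) (hP : ∀ x, 0 ≤ P x) (hPsum : ∑ x, P x = 1)
    (k : ℕ) (hk : 1 ≤ k) (D : ℕ) (hD : 2 ≤ D)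
    (ρ : ℝ) (hρ : 0 < ρ) :
    ∃ c : (Fin k → 𝒳) → List (Fin D), UniquelyDecodable c ∧
      ((1 / (k : ℝ)) * Real.logb D
          (∑ xk : Fin k → 𝒳, (∏ i, P (xk i)) * (D : ℝ) ^ (ρ * ((c xk).length : ℝ)))) / ρ
        ≤ (1 / Real.log D) *
            ((1 - 1 / (1 + ρ))⁻¹ * Real.log (∑ x, P x ^ (1 / (1 + ρ))))
          + 1 / (k : ℝ) := by
  obtain ⟨c, hc, hbound⟩ := exists_uniquelyDecodable_sum_mul_rpow_length_le
    (fun xk : Fin k → 𝒳 => ∏ i, P (xk i)) (fun xk => prod_nonneg fun i _ => hP (xk i))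
    (by omega : 1 < D) hρ.le
  rw [sum_prod_rpow_eq_pow P hP] at hbound
  have hD1 : (1 : ℝ) < D := by exact_mod_cast hD
  have hΛ : 1 ≤ ∑ xk : Fin k → 𝒳, (∏ i, P (xk i)) * (D : ℝ) ^ (ρ * ((c xk).length : ℝ)) :=
    calc (1 : ℝ) = ∑ xk : Fin k → 𝒳, ∏ i, P (xk i) := by rw [← Fintype.sum_pow, hPsum, one_pow]
      _ ≤ _ := sum_le_sum fun xk _ => le_mul_of_one_le_right (prod_nonneg fun i _ => hP (xk i))
          (Real.one_le_rpow hD1.le (by positivity))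
  have hS : 0 < ∑ x, P x ^ (1 / (1 + ρ)) := by
    obtain ⟨x, -, hx⟩ := exists_ne_zero_of_sum_ne_zero (hPsum ▸ one_ne_zero)
    exact (Real.rpow_pos_of_pos ((hP x).lt_of_ne' hx) _).trans_le
      (single_le_sum (fun y _ => Real.rpow_nonneg (hP y) _) (mem_univ x))
  exact ⟨c, hc, div_logb_le_of_le_mul_rpow hk hD1 hρ (zero_lt_one.trans_le hΛ) hS hbound⟩
end

section
/- Let $P_X$ be a probability mass function on $\{1,\ldots,n\}$ with $P_X(1)\ge P_X(2)\ge\cdots\ge P_X(n)>0$, and let $m\in\{2,\ldots,n-1\}$. Define the random variable $\widetilde{X}_m$ on $\{1,\ldots,m\}$ as follows: if $P_X(1)<\frac1m$, then $\widetilde{X}_m$ is equiprobable on $\{1,\ldots,m\}$; otherwise, $P_{\widetilde{X}_m}(i)=P_X(i)$ for $i\in\{1,\ldots,n^*\}$ and $P_{\widetilde{X}_m}(i)=\frac{1}{m-n^*}\sum_{j=n^*+1}^{n}P_X(j)$ for $i\in\{n^*+1,\ldots,m\}$, where $n^*$ is the maximal integer $i\in\{1,\ldots,m-1\}$ such that $P_X(i)\ge\frac{1}{m-i}\sum_{j=i+1}^{n}P_X(j)$.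 Then, for every $\alpha>0$ and every deterministic function $f\colon\{1,\ldots,n\}\to\{1,\ldots,m\}$, the Rényi entropy satisfies $H_\alpha(f(X))\;\le\;H_\alpha(\widetilde{X}_m)$, where $X$ has pmf $P_X$. -/
/-!
Let `R` be the pmf of `f(X)` and `r` its decreasing rearrangement. The atoms `f 1, …, f k` are at
most `k` in number, so `P 1 + ⋯ + P k ≤ r 1 + ⋯ + r k`; and since averages of the decreasing `r`
over initial segments of `(n*, m]` dominate its average over the whole of `(n*, m]`, the flat tail
of `Q` keeps every partial sum of `Q` below the corresponding one of `r`: `Q` is majorized by `r`.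
Rényi entropy is Schur-concave: for a convex `φ` Karamata's inequality `∑ φ (Q i) ≤ ∑ φ (r i)`
follows from the tangent lines of `φ` at the decreasing `Q` and Abel summation, and it is applied
to `x ^ α` (`α > 1`), `-x ^ α` (`α < 1`) and `x log x` (`α = 1`).
-/

open scoped BigOperators

/-- The Rényi entropy of order `α > 0` of a pmf `p` supported on the finite index set
`s`, with the Shannon entropy as its continuous extension at `α = 1`. -/
noncomputable def renyiEntropy {ι : Type*} (α : ℝ) (s : Finset ι) (p : ι → ℝ) : ℝ :=
  if α = 1 then ∑ i ∈ s, -(p i * Real.log (p i))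
  else (1 - α)⁻¹ * Real.log (∑ i ∈ s, p i ^ α)

open Finset

theorem ConvexOn.add_deriv_mul_sub_le {S : Set ℝ} {φ : ℝ → ℝ} {x y : ℝ} (hφ : ConvexOn ℝ S φ)
    (hx : x ∈ S) (hy : y ∈ S) (hd : DifferentiableAt ℝ φ x) :
    φ x + deriv φ x * (y - x) ≤ φ y := by
  rcases lt_trichotomy x y with hxy | rfl | hyx
  · have := hφ.deriv_le_slope hx hy hxy hd
    rw [slope_def_field, le_div_iff₀ (sub_pos.2 hxy)] at this
    linarith
  · simp
  · have := hφ.slope_le_deriv hy hx hyx hd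
    rw [slope_def_field, div_le_iff₀ (sub_pos.2 hyx)] at this
    linarith

theorem sum_Icc_one_add_sum_Ioc {M : Type*} [AddCommMonoid M] (f : ℕ → M) {a b : ℕ}
    (hab : a ≤ b) : ∑ i ∈ Icc 1 a, f i + ∑ i ∈ Ioc a b, f i = ∑ i ∈ Icc 1 b, f i := by
  rw [← zero_add 1, Icc_add_one_left_eq_Ioc, Icc_add_one_left_eq_Ioc]
  exact sum_Ioc_consecutive f a.zero_le hab

/-- Abel summation `∑ aᵢ dᵢ = a_m D_m + ∑_{k<m} (a_k - a_{k+1}) D_k`, `D_k = ∑_{i ≤ k} dᵢ`. -/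
theorem sum_Icc_mul_nonneg_of_antitoneOn {a d : ℕ → ℝ} {m : ℕ}
    (ha : AntitoneOn a (Set.Icc 1 m)) (hd : ∀ k ≤ m, 0 ≤ ∑ i ∈ Icc 1 k, d i)
    (hdm : ∑ i ∈ Icc 1 m, d i = 0) : 0 ≤ ∑ i ∈ Icc 1 m, a i * d i := by
  suffices key : ∀ k ≤ m, a k * ∑ i ∈ Icc 1 k, d i ≤ ∑ i ∈ Icc 1 k, a i * d i by
    simpa [hdm] using key m le_rfl
  intro k hk
  induction k with
  | zero => simp
  | succ k ih =>
    have hstep : a (k + 1) * ∑ i ∈ Icc 1 k, d i ≤ a k * ∑ i ∈ Icc 1 k, d i := by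
      rcases Nat.eq_zero_or_pos k with rfl | hk0
      · simp
      · exact mul_le_mul_of_nonneg_right (ha ⟨hk0, by omega⟩ ⟨by omega, hk⟩ (by omega))
          (hd k (by omega))
    rw [sum_Icc_succ_top (by omega), sum_Icc_succ_top (by omega), mul_add]
    linarith [ih (by omega)]

theorem ConvexOn.sum_le_sum_of_majorization {φ : ℝ → ℝ} (hφ : ConvexOn ℝ (Set.Ici 0) φ)
    (hφd : ∀ x, 0 < x → DifferentiableAt ℝ φ x) {m : ℕ} {q r : ℕ → ℝ}
    (hq : AntitoneOn q (Set.Icc 1 m)) (hqpos : ∀ i ∈ Icc 1 m, 0 < q i)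
    (hr : ∀ i ∈ Icc 1 m, 0 ≤ r i)
    (hmaj : ∀ k ≤ m, ∑ i ∈ Icc 1 k, q i ≤ ∑ i ∈ Icc 1 k, r i)
    (hsum : ∑ i ∈ Icc 1 m, q i = ∑ i ∈ Icc 1 m, r i) :
    ∑ i ∈ Icc 1 m, φ (q i) ≤ ∑ i ∈ Icc 1 m, φ (r i) := by
  have hslope : AntitoneOn (fun i => deriv φ (q i)) (Set.Icc 1 m) :=
    ((hφ.subset Set.Ioi_subset_Ici_self (convex_Ioi 0)).monotoneOn_deriv hφd).comp_AntitoneOn hq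
      fun i hi => hqpos i (by simpa using hi)
  have habel := sum_Icc_mul_nonneg_of_antitoneOn hslope (d := fun i => r i - q i)
    (fun k hk => by simpa [sum_sub_distrib] using hmaj k hk) (by simp [sum_sub_distrib, hsum])
  have htangent : ∀ i ∈ Icc 1 m, φ (q i) + deriv φ (q i) * (r i - q i) ≤ φ (r i) :=
    fun i hi => hφ.add_deriv_mul_sub_le (Set.mem_Ici.2 (hqpos i hi).le) (hr i hi)
      (hφd _ (hqpos i hi))
  have := sum_le_sum htangent
  rw [sum_add_distrib] at this
  linarith

theorem renyiEntropy_le_of_majorization {α : ℝ} (hα : 0 < α) {m : ℕ} (hm : 1 ≤ m)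
    {q r : ℕ → ℝ} (hq : AntitoneOn q (Set.Icc 1 m)) (hqpos : ∀ i ∈ Icc 1 m, 0 < q i)
    (hr : ∀ i ∈ Icc 1 m, 0 ≤ r i)
    (hmaj : ∀ k ≤ m, ∑ i ∈ Icc 1 k, q i ≤ ∑ i ∈ Icc 1 k, r i)
    (hsum : ∑ i ∈ Icc 1 m, q i = ∑ i ∈ Icc 1 m, r i) :
    renyiEntropy α (Icc 1 m) r ≤ renyiEntropy α (Icc 1 m) q := by
  have karamata {φ : ℝ → ℝ} (hφ : ConvexOn ℝ (Set.Ici 0) φ)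
      (hφd : ∀ x, 0 < x → DifferentiableAt ℝ φ x) :=
    hφ.sum_le_sum_of_majorization hφd hq hqpos hr hmaj hsum
  have hqα : 0 < ∑ i ∈ Icc 1 m, q i ^ α :=
    sum_pos (fun i hi => Real.rpow_pos_of_pos (hqpos i hi) α) ⟨1, by simpa using hm⟩
  have hrα : 0 < ∑ i ∈ Icc 1 m, r i ^ α := by
    obtain ⟨i, hi, hri⟩ : ∃ i ∈ Icc 1 m, (0 : ℝ) < r i := by
      refine exists_lt_of_sum_lt ?_
      rw [sum_const_zero, ← hsum]
      exact sum_pos hqpos ⟨1, by simpa using hm⟩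
    exact sum_pos' (fun j hj => Real.rpow_nonneg (hr j hj) α) ⟨i, hi, Real.rpow_pos_of_pos hri α⟩
  have hdiff (x : ℝ) (hx : 0 < x) : DifferentiableAt ℝ (fun x => x ^ α) x :=
    Real.differentiableAt_rpow_const_of_ne α hx.ne'
  unfold renyiEntropy
  rcases lt_trichotomy α 1 with hα1 | rfl | hα1
  · have hle : ∑ i ∈ Icc 1 m, r i ^ α ≤ ∑ i ∈ Icc 1 m, q i ^ α := by
      simpa [sum_neg_distrib] using
        karamata (Real.concaveOn_rpow hα.le hα1.le).neg fun x hx => (hdiff x hx).neg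
    simp only [hα1.ne, if_false]
    exact mul_le_mul_of_nonneg_left (Real.log_le_log hrα hle) (inv_nonneg.2 (by linarith))
  · simpa [sum_neg_distrib] using
      karamata Real.convexOn_mul_log fun x hx => (Real.hasDerivAt_mul_log hx.ne').differentiableAt
  · have hle : ∑ i ∈ Icc 1 m, q i ^ α ≤ ∑ i ∈ Icc 1 m, r i ^ α :=
      karamata (convexOn_rpow hα1.le) hdiff
    simp only [hα1.ne', if_false]
    exact mul_le_mul_of_nonpos_left (Real.log_le_log hqα hle) (inv_nonpos.2 (by linarith))

theorem renyiEntropy_comp_perm {ι : Type*} (α : ℝ) {s : Finset ι} (p : ι → ℝ)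
    {σ : Equiv.Perm ι} (hσ : {a | σ a ≠ a} ⊆ s) :
    renyiEntropy α s (p ∘ σ) = renyiEntropy α s p := by
  simp only [renyiEntropy, Function.comp_apply, σ.sum_comp s (fun i => -(p i * Real.log (p i))) hσ,
    σ.sum_comp s (fun i => p i ^ α) hσ]

theorem Finset.exists_perm_antitoneOn_comp {ι α : Type*} [LinearOrder ι] [LinearOrder α]
    (s : Finset ι) (R : ι → α) :
    ∃ σ : Equiv.Perm ι, {a | σ a ≠ a} ⊆ s ∧ AntitoneOn (R ∘ σ) s := by
  classical
  let e := s.orderIsoOfFin rfl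
  let τ := Tuple.sort fun k => OrderDual.toDual (R (e k))
  refine ⟨τ.extendDomain e.toEquiv, fun a ha => ?_, fun x hx y hy hxy => ?_⟩
  · by_contra h
    exact ha (Equiv.Perm.extendDomain_apply_not_subtype _ _ h)
  · have := Tuple.monotone_sort (fun k => OrderDual.toDual (R (e k)))
      (e.symm.monotone (show (⟨x, hx⟩ : s) ≤ ⟨y, hy⟩ from hxy))
    simpa [Equiv.Perm.extendDomain_apply_subtype _ _ hx,
      Equiv.Perm.extendDomain_apply_subtype _ _ hy, τ] using this
theorem sum_le_sum_Icc_card_of_antitoneOn {r : ℕ → ℝ} {m : ℕ} (hr : AntitoneOn r (Set.Icc 1 m))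
    {t : Finset ℕ} (ht : t ⊆ Icc 1 m) : ∑ i ∈ t, r i ≤ ∑ i ∈ Icc 1 #t, r i := by
  set I := Icc 1 #t
  have hcard : #(t \ I) = #(I \ t) := card_sdiff_comm (by simp [I])
  have hswap : ∀ i ∈ t \ I, ∀ j ∈ I \ t, r i ≤ r j := by
    intro i hi j hj
    have hi' := mem_Icc.1 (ht (mem_sdiff.1 hi).1)
    have hj' := mem_Icc.1 (mem_sdiff.1 hj).1
    have hij : j < i := by simp only [I, mem_sdiff, mem_Icc] at hi hj; omega
    have hcm : #t ≤ m := by simpa using card_le_card ht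
    exact hr ⟨hj'.1, by omega⟩ ⟨hi'.1, hi'.2⟩ hij.le
  have hdiff : ∑ i ∈ t \ I, r i ≤ ∑ i ∈ I \ t, r i := by
    rcases (t \ I).eq_empty_or_nonempty with h | h
    · rw [h, card_empty] at hcard
      rw [h, card_eq_zero.1 hcard.symm]
    · calc ∑ i ∈ t \ I, r i ≤ #(t \ I) • (t \ I).sup' h r :=
            sum_le_card_nsmul _ _ _ fun i hi => le_sup' r hi
        _ = #(I \ t) • (t \ I).sup' h r := by rw [hcard]
        _ ≤ ∑ i ∈ I \ t, r i :=
            card_nsmul_le_sum _ _ _ fun j hj => sup'_le _ _ fun i hi => hswap i hi j hj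
  rw [← sum_inter_add_sum_sdiff t I, ← sum_inter_add_sum_sdiff I t, inter_comm]
  linarith

theorem sub_mul_sum_Ioc_le_of_antitoneOn {r : ℕ → ℝ} {a k b : ℕ}
    (hr : AntitoneOn r (Set.Ioc a b)) (hak : a ≤ k) (hkb : k ≤ b) :
    ((k : ℝ) - a) * ∑ i ∈ Ioc a b, r i ≤ ((b : ℝ) - a) * ∑ i ∈ Ioc a k, r i := by
  rcases hak.eq_or_lt with rfl | hak
  · simp
  have hk : k ∈ Set.Ioc a b := ⟨hak, hkb⟩
  have hhead : ((k : ℝ) - a) * r k ≤ ∑ i ∈ Ioc a k, r i := by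
    have := card_nsmul_le_sum (Ioc a k) r (r k) fun i hi =>
      hr ⟨(mem_Ioc.1 hi).1, (mem_Ioc.1 hi).2.trans hkb⟩ hk (mem_Ioc.1 hi).2
    rwa [Nat.card_Ioc, nsmul_eq_mul, Nat.cast_sub hak.le] at this
  have htail : ∑ i ∈ Ioc k b, r i ≤ ((b : ℝ) - k) * r k := by
    have := sum_le_card_nsmul (Ioc k b) r (r k) fun i hi =>
      hr hk ⟨hak.trans (mem_Ioc.1 hi).1, (mem_Ioc.1 hi).2⟩ (mem_Ioc.1 hi).1.le
    rwa [Nat.card_Ioc, nsmul_eq_mul, Nat.cast_sub hkb] at this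
  rw [← sum_Ioc_consecutive r hak.le hkb]
  have hak' : (a : ℝ) < k := by exact_mod_cast hak
  have hkb' : (k : ℝ) ≤ b := by exact_mod_cast hkb
  nlinarith [mul_le_mul_of_nonneg_left hhead (sub_nonneg.2 hkb'),
    mul_le_mul_of_nonneg_left htail (sub_nonneg.2 hak'.le)]

theorem sum_Icc_of_const_tail {q : ℕ → ℝ} {N m : ℕ} {c : ℝ} (hNm : N ≤ m)
    (hq : ∀ i ∈ Ioc N m, q i = c) :
    ∑ i ∈ Icc 1 m, q i = ∑ i ∈ Icc 1 N, q i + ((m : ℝ) - N) * c := by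
  rw [← sum_Icc_one_add_sum_Ioc q hNm, sum_congr rfl hq, sum_const, Nat.card_Ioc, nsmul_eq_mul,
    Nat.cast_sub hNm]

theorem sum_Icc_le_of_const_tail {q r : ℕ → ℝ} {N m : ℕ} {c : ℝ}
    (hr : AntitoneOn r (Set.Icc 1 m)) (hNm : N ≤ m)
    (hhead : ∀ k ≤ N, ∑ i ∈ Icc 1 k, q i ≤ ∑ i ∈ Icc 1 k, r i)
    (htail : ∀ i ∈ Ioc N m, q i = c) (hsum : ∑ i ∈ Icc 1 m, q i = ∑ i ∈ Icc 1 m, r i) :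
    ∀ k ≤ m, ∑ i ∈ Icc 1 k, q i ≤ ∑ i ∈ Icc 1 k, r i := by
  intro k hkm
  rcases le_or_gt k N with hkN | hNk
  · exact hhead k hkN
  have havg := sub_mul_sum_Ioc_le_of_antitoneOn
    (hr.mono fun i hi => ⟨by simp at hi; omega, hi.2⟩) hNk.le hkm
  have hN := hhead N le_rfl
  rw [sum_Icc_of_const_tail hNm htail, ← sum_Icc_one_add_sum_Ioc r hNm] at hsum
  rw [sum_Icc_of_const_tail hNk.le fun i hi => htail i (Ioc_subset_Ioc_right hkm hi),
    ← sum_Icc_one_add_sum_Ioc r hNk.le]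
  have hNk' : (N : ℝ) < k := by exact_mod_cast hNk
  have hkm' : (k : ℝ) ≤ m := by exact_mod_cast hkm
  refine le_of_mul_le_mul_left ?_ (sub_pos.2 (hNk'.trans_le hkm'))
  nlinarith [mul_le_mul_of_nonneg_left hN (sub_nonneg.2 hkm')]

def pushforward (n : ℕ) (f : ℕ → ℕ) (P : ℕ → ℝ) (j : ℕ) : ℝ :=
  ∑ i ∈ (Icc 1 n).filter (fun i => f i = j), P i

section pushforward

variable {n m : ℕ} {f : ℕ → ℕ} {P : ℕ → ℝ}

theorem pushforward_nonneg (hP : ∀ i ∈ Icc 1 n, 0 ≤ P i) (j : ℕ) : 0 ≤ pushforward n f P j :=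
  sum_nonneg fun i hi => hP i (mem_filter.1 hi).1

theorem sum_pushforward (hf : ∀ i ∈ Icc 1 n, f i ∈ Icc 1 m) :
    ∑ j ∈ Icc 1 m, pushforward n f P j = ∑ i ∈ Icc 1 n, P i :=
  sum_fiberwise_of_maps_to hf P

theorem sum_le_sum_image_pushforward (hP : ∀ i ∈ Icc 1 n, 0 ≤ P i) {A : Finset ℕ}
    (hA : A ⊆ Icc 1 n) : ∑ i ∈ A, P i ≤ ∑ j ∈ A.image f, pushforward n f P j := by
  unfold pushforward
  rw [sum_fiberwise_eq_sum_filter]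
  exact sum_le_sum_of_subset_of_nonneg
    (fun i hi => mem_filter.2 ⟨hA hi, mem_image_of_mem f hi⟩) fun i hi _ => hP i (mem_filter.1 hi).1

end pushforward

theorem sum_le_sum_Icc_comp_perm {R : ℕ → ℝ} (hR : ∀ i, 0 ≤ R i) {m : ℕ} {σ : Equiv.Perm ℕ}
    (hσ : {a | σ a ≠ a} ⊆ Icc 1 m) (hsorted : AntitoneOn (R ∘ σ) (Set.Icc 1 m))
    {t : Finset ℕ} (ht : t ⊆ Icc 1 m) {k : ℕ} (htk : #t ≤ k) :
    ∑ j ∈ t, R j ≤ ∑ i ∈ Icc 1 k, (R ∘ σ) i := by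
  have hmaps : ∀ x ∈ Icc 1 m, σ.symm x ∈ Icc 1 m := by
    intro x hx
    by_contra h
    have hfix : σ (σ.symm x) = σ.symm x := by
      by_contra h'
      exact h (hσ h')
    rw [Equiv.apply_symm_apply] at hfix
    exact h (hfix ▸ hx)
  calc ∑ j ∈ t, R j = ∑ i ∈ t.map σ.symm.toEmbedding, (R ∘ σ) i := by simp [sum_map]
    _ ≤ ∑ i ∈ Icc 1 #(t.map σ.symm.toEmbedding), (R ∘ σ) i :=
        sum_le_sum_Icc_card_of_antitoneOn hsorted fun i hi => by
          obtain ⟨x, hx, rfl⟩ := mem_map.1 hi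
          exact hmaps x (ht hx)
    _ ≤ ∑ i ∈ Icc 1 k, (R ∘ σ) i :=
        sum_le_sum_of_subset_of_nonneg (Icc_subset_Icc_right (by simpa using htk))
          fun i _ _ => hR _

theorem renyiEntropy_pushforward_le_of_const_tail {n m N : ℕ} {P q : ℕ → ℝ} {f : ℕ → ℕ}
    {c α : ℝ} (hα : 0 < α) (hm : 1 ≤ m) (hNm : N ≤ m) (hNn : N ≤ n)
    (hP : ∀ i ∈ Icc 1 n, 0 ≤ P i) (hPsum : ∑ i ∈ Icc 1 n, P i = 1)
    (hf : ∀ i ∈ Icc 1 n, f i ∈ Icc 1 m)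
    (hqP : ∀ i ∈ Icc 1 N, q i = P i) (hqc : ∀ i ∈ Ioc N m, q i = c)
    (hq : AntitoneOn q (Set.Icc 1 m)) (hqpos : ∀ i ∈ Icc 1 m, 0 < q i)
    (hqsum : ∑ i ∈ Icc 1 m, q i = 1) :
    renyiEntropy α (Icc 1 m) (pushforward n f P) ≤ renyiEntropy α (Icc 1 m) q := by
  set R := pushforward n f P
  have hR : ∀ j, 0 ≤ R j := pushforward_nonneg hP
  obtain ⟨σ, hσ, hsorted⟩ := (Icc 1 m).exists_perm_antitoneOn_comp R
  rw [coe_Icc] at hsorted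
  have hsum : ∑ i ∈ Icc 1 m, q i = ∑ i ∈ Icc 1 m, (R ∘ σ) i := by
    rw [hqsum, ← hPsum, ← sum_pushforward hf, ← σ.sum_comp _ R hσ]
    rfl
  have hhead : ∀ k ≤ N, ∑ i ∈ Icc 1 k, q i ≤ ∑ i ∈ Icc 1 k, (R ∘ σ) i := by
    intro k hk
    rw [sum_congr rfl fun i hi => hqP i (Icc_subset_Icc_right hk hi)]
    calc ∑ i ∈ Icc 1 k, P i ≤ ∑ j ∈ (Icc 1 k).image f, R j :=
          sum_le_sum_image_pushforward hP (Icc_subset_Icc_right (hk.trans hNn))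
      _ ≤ ∑ i ∈ Icc 1 k, (R ∘ σ) i :=
          sum_le_sum_Icc_comp_perm hR hσ hsorted
            (fun j hj => by
              obtain ⟨i, hi, rfl⟩ := mem_image.1 hj
              exact hf i (Icc_subset_Icc_right (hk.trans hNn) hi))
            (card_image_le.trans (by simp))
  rw [← renyiEntropy_comp_perm α R hσ]
  exact renyiEntropy_le_of_majorization hα hm hq hqpos (fun i _ => hR _)
    (sum_Icc_le_of_const_tail hsorted hNm hhead hqc hsum) hsum

theorem renyiEntropy_pushforward_le_uniform {n m : ℕ} {P Q : ℕ → ℝ} {f : ℕ → ℕ} {α : ℝ}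
    (hα : 0 < α) (hm : 1 ≤ m) (hP : ∀ i ∈ Icc 1 n, 0 ≤ P i)
    (hPsum : ∑ i ∈ Icc 1 n, P i = 1) (hf : ∀ i ∈ Icc 1 n, f i ∈ Icc 1 m)
    (hQ : ∀ i ∈ Icc 1 m, Q i = 1 / (m : ℝ)) :
    renyiEntropy α (Icc 1 m) (pushforward n f P) ≤ renyiEntropy α (Icc 1 m) Q := by
  have hm' : (0 : ℝ) < m := by exact_mod_cast hm
  refine renyiEntropy_pushforward_le_of_const_tail hα hm m.zero_le n.zero_le hP hPsum hf
    (by simp) (fun i hi => hQ i (by simpa [Nat.one_le_iff_ne_zero, Nat.pos_iff_ne_zero] using hi))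
    (fun i hi j hj _ => by rw [hQ i (by simpa using hi), hQ j (by simpa using hj)])
    (fun i hi => by rw [hQ i hi]; positivity) ?_
  rw [sum_congr rfl hQ, sum_const, Nat.card_Icc, nsmul_eq_mul, Nat.add_sub_cancel]
  field_simp

theorem renyiEntropy_pushforward_le_waterfill {n m N : ℕ} {P Q : ℕ → ℝ} {f : ℕ → ℕ} {α : ℝ}
    (hα : 0 < α) (hmn : m ≤ n) (hPpos : ∀ i ∈ Icc 1 n, 0 < P i)
    (hPanti : AntitoneOn P (Set.Icc 1 n)) (hPsum : ∑ i ∈ Icc 1 n, P i = 1)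
    (hf : ∀ i ∈ Icc 1 n, f i ∈ Icc 1 m) (hN : N ∈ Icc 1 (m - 1))
    (hPN : (∑ j ∈ Icc (N + 1) n, P j) / ((m : ℝ) - N) ≤ P N)
    (hQ : ∀ i ∈ Icc 1 m, Q i =
      if i ≤ N then P i else (∑ j ∈ Icc (N + 1) n, P j) / ((m : ℝ) - N)) :
    renyiEntropy α (Icc 1 m) (pushforward n f P) ≤ renyiEntropy α (Icc 1 m) Q := by
  set c := (∑ j ∈ Icc (N + 1) n, P j) / ((m : ℝ) - N)
  obtain ⟨hN1, hNm⟩ := mem_Icc.1 hN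
  have hmN : (0 : ℝ) < m - N := by
    have : (N : ℝ) + 1 ≤ m := by exact_mod_cast (by omega : N + 1 ≤ m)
    linarith
  have hc : 0 < c := by
    refine div_pos (sum_pos (fun j hj => hPpos j ?_) ⟨N + 1, by simp; omega⟩) hmN
    exact Icc_subset_Icc_left (by omega) hj
  have hqP : ∀ i ∈ Icc 1 N, Q i = P i := fun i hi => by
    rw [hQ i (Icc_subset_Icc_right (by omega) hi), if_pos (mem_Icc.1 hi).2]
  have hqc : ∀ i ∈ Ioc N m, Q i = c := fun i hi => by
    have := mem_Ioc.1 hi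
    rw [hQ i (mem_Icc.2 ⟨by omega, this.2⟩), if_neg (by omega)]
  refine renyiEntropy_pushforward_le_of_const_tail hα (by omega) (by omega) (by omega)
    (fun i hi => (hPpos i hi).le) hPsum hf hqP hqc ?_ ?_ ?_
  · intro i hi j hj hij
    rw [hQ i (by simpa using hi), hQ j (by simpa using hj)]
    split_ifs with hjN hiN hiN
    · exact hPanti ⟨hi.1, by omega⟩ ⟨hj.1, by omega⟩ hij
    · omega
    · exact hPN.trans (hPanti ⟨hi.1, by omega⟩ ⟨hN1, by omega⟩ hiN)
    · rfl
  · intro i hi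
    rw [hQ i hi]
    split_ifs
    · exact hPpos i (mem_Icc.2 ⟨(mem_Icc.1 hi).1, by omega⟩)
    · exact hc
  · rw [sum_Icc_of_const_tail (by omega) hqc, sum_congr rfl hqP, mul_div_cancel₀ _ hmN.ne',
      Icc_add_one_left_eq_Ioc, sum_Icc_one_add_sum_Ioc P (by omega), hPsum]

/-- **Tight upper bound on the Rényi entropy of a function of a discrete random
variable.**  Let `P` be a pmf on `{1,…,n}` with `P 1 ≥ ⋯ ≥ P n > 0` and let
`m ∈ {2,…,n-1}`.  Define the pmf `Q` of `X̃_m` on `{1,…,m}`: if `P 1 < 1/m` then `Q` is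
uniform; otherwise `Q i = P i` for `i ≤ n*` and `Q i = (∑_{j=n*+1}^n P j)/(m-n*)` for
`n* < i ≤ m`, where `n*` is the maximal `i ∈ {1,…,m-1}` with
`P i ≥ (∑_{j=i+1}^n P j)/(m-i)`.  Then for every `α > 0` and every deterministic
`f : {1,…,n} → {1,…,m}`, `H_α(f(X)) ≤ H_α(X̃_m)`. -/
theorem renyi_entropy_function_upper_bound
    (n m : ℕ) (hm2 : 2 ≤ m) (hmn : m + 1 ≤ n)
    (P : ℕ → ℝ) (hPpos : ∀ i ∈ Finset.Icc 1 n, 0 < P i)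
    (hPanti : ∀ i j, 1 ≤ i → i ≤ j → j ≤ n → P j ≤ P i)
    (hPsum : ∑ i ∈ Finset.Icc 1 n, P i = 1)
    (nstar : ℕ)
    (hnstar : 1 / (m : ℝ) ≤ P 1 →
      nstar ∈ Finset.Icc 1 (m - 1) ∧
      (∑ j ∈ Finset.Icc (nstar + 1) n, P j) / ((m : ℝ) - nstar) ≤ P nstar ∧
      ∀ i ∈ Finset.Icc 1 (m - 1),
        (∑ j ∈ Finset.Icc (i + 1) n, P j) / ((m : ℝ) - i) ≤ P i → i ≤ nstar)
    (Q : ℕ → ℝ)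
    (hQunif : P 1 < 1 / (m : ℝ) → ∀ i ∈ Finset.Icc 1 m, Q i = 1 / (m : ℝ))
    (hQ : 1 / (m : ℝ) ≤ P 1 → ∀ i ∈ Finset.Icc 1 m,
      Q i = if i ≤ nstar then P i
            else (∑ j ∈ Finset.Icc (nstar + 1) n, P j) / ((m : ℝ) - nstar))
    (α : ℝ) (hα : 0 < α)
    (f : ℕ → ℕ) (hf : ∀ i ∈ Finset.Icc 1 n, f i ∈ Finset.Icc 1 m) :
    renyiEntropy α (Finset.Icc 1 m)
        (fun j => ∑ i ∈ (Finset.Icc 1 n).filter (fun i => f i = j), P i)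
      ≤ renyiEntropy α (Finset.Icc 1 m) Q := by
  rcases lt_or_ge (P 1) (1 / (m : ℝ)) with hunif | hwater
  · exact renyiEntropy_pushforward_le_uniform hα (by omega) (fun i hi => (hPpos i hi).le) hPsum
      hf (hQunif hunif)
  · obtain ⟨hN, hPN, -⟩ := hnstar hwater
    exact renyiEntropy_pushforward_le_waterfill hα (by omega) hPpos
      (fun i hi j hj hij => hPanti i j hi.1 hij hj.2) hPsum hf hN hPN (hQ hwater)
end
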